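/- arXiv:2311.13662 — 13 statements merged into one kernel-verified Lean document; each statement's English description precedes it below -/
import Mathlib

section
/- Let t ≥ 2 and let G_{A,B} be a K_{t,t}-free bipartite graph with |A| = m. Let ε ∈ (0,1) and let N be a family of s t-element subsets of A such that for every b ∈ B with deg(b) ≥ εm there exists T ∈ N with T ⊆ N(b) (i.e., N is an ε-t-net for the neighborhoods of B). Then the number of vertices b ∈ B with deg(b) ≥ εm is at most (t−1)·s. -/
open scoped Classical
open Finset

theorem stmt_0 {α β : Type*} [DecidableEq α] [DecidableEq β]
    (t m s : ℕ) (ht : 2 ≤ t)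
    (A : Finset α) (B : Finset β) (E : Finset (α × β))
    (hE : E ⊆ A ×ˢ B) (hm : A.card = m)
    (hfree : ¬ ∃ (S : Finset α) (T : Finset β), S ⊆ A ∧ T ⊆ B ∧
      S.card = t ∧ T.card = t ∧ ∀ a ∈ S, ∀ b ∈ T, (a, b) ∈ E)
    (ε : ℝ) (hε0 : 0 < ε) (hε1 : ε < 1)
    (N : Finset (Finset α)) (hs : N.card = s)
    (hNsub : ∀ T ∈ N, T ⊆ A ∧ T.card = t)
    (hnet : ∀ b ∈ B, ε * m ≤ ((A.filter fun a => (a, b) ∈ E).card : ℝ) →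
      ∃ T ∈ N, T ⊆ A.filter fun a => (a, b) ∈ E) :
    (B.filter fun b => ε * m ≤ ((A.filter fun a => (a, b) ∈ E).card : ℝ)).card
      ≤ (t - 1) * s := by
  classical
  set H := B.filter fun b => ε * m ≤ ((A.filter fun a => (a, b) ∈ E).card : ℝ) with hH
  have hchoice : ∀ b ∈ H, ∃ T ∈ N, T ⊆ A.filter fun a => (a, b) ∈ E := by
    intro b hb
    rw [hH, mem_filter] at hb
    exact hnet b hb.1 hb.2
  choose f hfN hfsub using hchoice
  -- define g : β → Finset α totally
  have key : H.card = ∑ T ∈ N, (H.attach.filter fun b => f b.1 b.2 = T).card := by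
    rw [← Finset.card_attach (s := H)]
    exact Finset.card_eq_sum_card_fiberwise (fun b _ => hfN b.1 b.2)
  rw [key]
  have hbound : ∀ T ∈ N, (H.attach.filter fun b => f b.1 b.2 = T).card ≤ t - 1 := by
    intro T hT
    by_contra hc
    push_neg at hc
    have hc' : t ≤ (H.attach.filter fun b => f b.1 b.2 = T).card := by omega
    obtain ⟨F, hFsub, hFcard⟩ := Finset.exists_subset_card_eq hc'
    apply hfree
    refine ⟨T, F.image (fun b => b.1), (hNsub T hT).1, ?_, (hNsub T hT).2, ?_, ?_⟩
    · intro b hb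
      simp only [mem_image] at hb
      obtain ⟨b', _, rfl⟩ := hb
      have := b'.2
      simp only [hH, mem_filter] at this
      exact this.1
    · rw [Finset.card_image_of_injOn, hFcard]
      intro x _ y _ hxy
      exact Subtype.ext hxy
    · intro a ha b hb
      simp only [mem_image] at hb
      obtain ⟨b', hb', rfl⟩ := hb
      have hb'f := hFsub hb'
      rw [mem_filter] at hb'f
      have := hfsub b'.1 b'.2
      rw [hb'f.2] at this
      have := this ha
      rw [mem_filter] at this
      exact this.2
  calc ∑ T ∈ N, (H.attach.filter fun b => f b.1 b.2 = T).card
      ≤ ∑ T ∈ N, (t - 1) := Finset.sum_le_sum hbound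
    _ = (t - 1) * s := by rw [Finset.sum_const, smul_eq_mul, hs, Nat.mul_comm]
end

section
/- Let t ≥ 2 and let G_{A,B} be a K_{t,t}-free bipartite graph with |A| = m and |B| = n. Let ε ∈ (0,1) and let N be a family of s t-element subsets of A such that for every b ∈ B with deg(b) ≥ εm there exists T ∈ N with T ⊆ N(b). Then |E(G)| ≤ n·⌊εm⌋ + s·(t−1)·m. -/
open scoped Classical
open Finset

/-!
Summing degrees over `B`, a vertex of degree below `εm` contributes at most `⌊εm⌋`, and every
other vertex contributes at most `m`. A vertex of the second kind contains some `T ∈ N` in its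
neighbourhood; since `G` is `K_{t,t}`-free, each `T ∈ N` is covered in this way by at most `t - 1`
vertices, so there are at most `s (t - 1)` of them.
-/

section Bipartite

variable {α β : Type*} {A : Finset α} {B : Finset β} {E : Finset (α × β)}

lemma card_eq_sum_card_filter_of_subset_product [DecidableEq α] [DecidableEq β]
    (hE : E ⊆ A ×ˢ B) : E.card = ∑ b ∈ B, (A.filter fun a => (a, b) ∈ E).card := by
  calc E.card = ((A ×ˢ B).filter (· ∈ E)).card := by
        rw [filter_mem_eq_inter, inter_eq_right.2 hE]
    _ = _ := by rw [card_filter, sum_product_right]; simp only [card_filter]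

lemma card_lt_of_not_exists_biclique {t : ℕ}
    (hfree : ¬ ∃ (S : Finset α) (T : Finset β), S ⊆ A ∧ T ⊆ B ∧
      S.card = t ∧ T.card = t ∧ ∀ a ∈ S, ∀ b ∈ T, (a, b) ∈ E)
    {S : Finset α} (hSA : S ⊆ A) (hS : S.card = t) {T : Finset β} (hTB : T ⊆ B)
    (hST : ∀ a ∈ S, ∀ b ∈ T, (a, b) ∈ E) : T.card < t := by
  by_contra! htT
  obtain ⟨T', hT'T, hT'⟩ := exists_subset_card_eq htT
  exact hfree ⟨S, T', hSA, hT'T.trans hTB, hS, hT', fun a ha b hb => hST a ha b (hT'T hb)⟩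

lemma card_le_card_mul_pred_of_forall_exists_subset [DecidableEq α] [DecidableEq β] {t : ℕ}
    (hfree : ¬ ∃ (S : Finset α) (T : Finset β), S ⊆ A ∧ T ⊆ B ∧
      S.card = t ∧ T.card = t ∧ ∀ a ∈ S, ∀ b ∈ T, (a, b) ∈ E)
    {N : Finset (Finset α)} (hN : ∀ T ∈ N, T ⊆ A ∧ T.card = t) {B' : Finset β} (hB' : B' ⊆ B)
    (hcover : ∀ b ∈ B', ∃ T ∈ N, T ⊆ A.filter fun a => (a, b) ∈ E) :
    B'.card ≤ N.card * (t - 1) := by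
  choose! g hgN hg using hcover
  rw [card_eq_sum_card_fiberwise hgN, ← smul_eq_mul]
  refine sum_le_card_nsmul _ _ _ fun T hT => Nat.le_pred_of_lt ?_
  refine card_lt_of_not_exists_biclique hfree (hN T hT).1 (hN T hT).2
    ((filter_subset _ _).trans hB') fun a ha b hb => ?_
  obtain ⟨hbB', rfl⟩ := mem_filter.1 hb
  exact (mem_filter.1 (hg b hbB' ha)).2

end Bipartite

lemma sum_le_card_mul_floor_add_card_filter_mul {β : Type*} (B : Finset β) (f : β → ℕ) (x : ℝ)
    {c : ℕ} (hf : ∀ b ∈ B, f b ≤ c) :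
    ∑ b ∈ B, f b ≤ B.card * ⌊x⌋₊ + (B.filter fun b => x ≤ f b).card * c := by
  rw [← sum_filter_not_add_sum_filter B fun b => x ≤ f b]
  refine add_le_add ?_ ?_
  · calc ∑ b ∈ B.filter (fun b => ¬ x ≤ f b), f b
        ≤ (B.filter fun b => ¬ x ≤ f b).card • ⌊x⌋₊ :=
          sum_le_card_nsmul _ _ _ fun b hb => Nat.le_floor (not_le.1 (mem_filter.1 hb).2).le
      _ ≤ B.card * ⌊x⌋₊ := by
        rw [smul_eq_mul]; exact Nat.mul_le_mul_right _ (card_filter_le B _)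
  · exact (sum_le_card_nsmul _ _ _ fun b hb => hf b (mem_filter.1 hb).1).trans_eq (smul_eq_mul ..)

theorem stmt_1_general {α β : Type*} [DecidableEq α] [DecidableEq β]
    (t m n s : ℕ)
    (A : Finset α) (B : Finset β) (E : Finset (α × β))
    (hE : E ⊆ A ×ˢ B) (hm : A.card = m) (hn : B.card = n)
    (hfree : ¬ ∃ (S : Finset α) (T : Finset β), S ⊆ A ∧ T ⊆ B ∧
      S.card = t ∧ T.card = t ∧ ∀ a ∈ S, ∀ b ∈ T, (a, b) ∈ E)
    (ε : ℝ)
    (N : Finset (Finset α)) (hs : N.card = s)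
    (hNsub : ∀ T ∈ N, T ⊆ A ∧ T.card = t)
    (hnet : ∀ b ∈ B, ε * m ≤ ((A.filter fun a => (a, b) ∈ E).card : ℝ) →
      ∃ T ∈ N, T ⊆ A.filter fun a => (a, b) ∈ E) :
    E.card ≤ n * ⌊ε * (m : ℝ)⌋₊ + s * (t - 1) * m := by
  set deg : β → ℕ := fun b => (A.filter fun a => (a, b) ∈ E).card
  have hdeg : ∀ b ∈ B, deg b ≤ m := fun b _ => hm ▸ card_filter_le _ _
  have hhigh : (B.filter fun b => ε * m ≤ deg b).card ≤ s * (t - 1) :=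
    hs ▸ card_le_card_mul_pred_of_forall_exists_subset hfree hNsub (filter_subset _ _)
      fun b hb => hnet b (mem_filter.1 hb).1 (mem_filter.1 hb).2
  calc E.card = ∑ b ∈ B, deg b := card_eq_sum_card_filter_of_subset_product hE
    _ ≤ B.card * ⌊ε * (m : ℝ)⌋₊ + (B.filter fun b => ε * m ≤ deg b).card * m :=
      sum_le_card_mul_floor_add_card_filter_mul B deg _ hdeg
    _ ≤ n * ⌊ε * (m : ℝ)⌋₊ + s * (t - 1) * m := by rw [hn]; gcongr

theorem stmt_1 {α β : Type*} [DecidableEq α] [DecidableEq β]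
    (t m n s : ℕ) (ht : 2 ≤ t)
    (A : Finset α) (B : Finset β) (E : Finset (α × β))
    (hE : E ⊆ A ×ˢ B) (hm : A.card = m) (hn : B.card = n)
    (hfree : ¬ ∃ (S : Finset α) (T : Finset β), S ⊆ A ∧ T ⊆ B ∧
      S.card = t ∧ T.card = t ∧ ∀ a ∈ S, ∀ b ∈ T, (a, b) ∈ E)
    (ε : ℝ) (hε0 : 0 < ε) (hε1 : ε < 1)
    (N : Finset (Finset α)) (hs : N.card = s)
    (hNsub : ∀ T ∈ N, T ⊆ A ∧ T.card = t)
    (hnet : ∀ b ∈ B, ε * m ≤ ((A.filter fun a => (a, b) ∈ E).card : ℝ) →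
      ∃ T ∈ N, T ⊆ A.filter fun a => (a, b) ∈ E) :
    E.card ≤ n * ⌊ε * (m : ℝ)⌋₊ + s * (t - 1) * m :=
  stmt_1_general t m n s A B E hE hm hn hfree ε N hs hNsub hnet
end

section
/- Let t ≥ 2 and let G_{A,B} be a K_{t,t}-free bipartite graph with |A| = m and |B| = n. Let ε, ε' ∈ (0,1). Suppose N is a family of s t-element subsets of A such that every b ∈ B with deg(b) ≥ εm has some T ∈ N with T ⊆ N(b), and N' is a family of s' t-element subsets of B such that every a ∈ A with deg(a) ≥ ε'n has some T' ∈ N' with T' ⊆ N(a). Then |E(G)| ≤ n·⌊εm⌋ + m·⌊ε'n⌋ + s·s'·(t−1)². -/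
/-!
Sort the edges `(a, b)` into three classes. Edges whose endpoint `b` has degree below `εm` number
at most `n ⌊εm⌋`, and symmetrically edges whose endpoint `a` has degree below `ε'n` number at most
`m ⌊ε'n⌋`. Every remaining edge has a `T ∈ N` inside `N(b)` and a `T' ∈ N'` inside `N(a)`, so it lies
in `X(T') × Y(T)`, where `X(T')` is the common neighbourhood of `T'` in `A` and `Y(T)` that of `T`
in `B`. Since `G` is `K_{t,t}`-free, both common neighbourhoods have fewer than `t` vertices, and
there are only `s s'` pairs `(T, T')`.
-/

open scoped Classical
open Finset

section Bipartite

variable {α β γ δ : Type*} [DecidableEq α] [DecidableEq β]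

def IsBicliqueFree (A : Finset α) (B : Finset β) (E : Finset (α × β)) (t : ℕ) : Prop :=
  ¬ ∃ (S : Finset α) (T : Finset β), S ⊆ A ∧ T ⊆ B ∧
    S.card = t ∧ T.card = t ∧ ∀ a ∈ S, ∀ b ∈ T, (a, b) ∈ E

variable {A : Finset α} {B : Finset β} {E : Finset (α × β)} {t : ℕ}

theorem IsBicliqueFree.card_commonNbhd_right_lt (hfree : IsBicliqueFree A B E t)
    {S : Finset α} (hSA : S ⊆ A) (hS : #S = t) : #{b ∈ B | ∀ a ∈ S, (a, b) ∈ E} < t := by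
  by_contra! h
  obtain ⟨T, hT, hTcard⟩ := exists_subset_card_eq h
  exact hfree ⟨S, T, hSA, hT.trans (filter_subset _ _), hS, hTcard,
    fun a ha b hb => (mem_filter.1 (hT hb)).2 a ha⟩

theorem IsBicliqueFree.card_commonNbhd_left_lt (hfree : IsBicliqueFree A B E t)
    {T : Finset β} (hTB : T ⊆ B) (hT : #T = t) : #{a ∈ A | ∀ b ∈ T, (a, b) ∈ E} < t := by
  by_contra! h
  obtain ⟨S, hS, hScard⟩ := exists_subset_card_eq h
  exact hfree ⟨S, T, hS.trans (filter_subset _ _), hTB, hScard, hT,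
    fun a ha b hb => (mem_filter.1 (hS ha)).2 b hb⟩

theorem card_filter_card_fiber_le [DecidableEq δ] {s : Finset γ} {u : Finset δ} {f : γ → δ}
    (hf : ∀ x ∈ s, f x ∈ u) (k : ℕ) : #{x ∈ s | #{y ∈ s | f y = f x} ≤ k} ≤ #u * k := by
  rw [mul_comm]
  refine card_le_mul_card_image_of_maps_to (fun x hx => hf x (mem_filter.1 hx).1) k fun d _ => ?_
  rcases eq_empty_or_nonempty {x ∈ {x ∈ s | #{y ∈ s | f y = f x} ≤ k} | f x = d} with
    hempty | ⟨x, hx⟩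
  · simp [hempty]
  · simp only [mem_filter] at hx
    obtain ⟨⟨-, hxk⟩, rfl⟩ := hx
    refine (card_le_card fun y hy => ?_).trans hxk
    simp only [mem_filter] at hy ⊢
    exact ⟨hy.1.1, hy.2⟩

theorem card_filter_mem_eq_card_filter_snd (hE : E ⊆ A ×ˢ B) (b : β) :
    #{a ∈ A | (a, b) ∈ E} = #{p ∈ E | p.2 = b} := by
  refine card_nbij' (fun a => (a, b)) Prod.fst (fun a ha => ?_) (fun p hp => ?_)
    (fun _ _ => rfl) (fun p hp => ?_)
  · simpa using (mem_filter.1 ha).2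
  · obtain ⟨hpE, rfl⟩ := mem_filter.1 hp
    simpa using ⟨(mem_product.1 (hE hpE)).1, hpE⟩
  · obtain ⟨-, rfl⟩ := mem_filter.1 hp
    rfl

theorem card_filter_mem_eq_card_filter_fst (hE : E ⊆ A ×ˢ B) (a : α) :
    #{b ∈ B | (a, b) ∈ E} = #{p ∈ E | p.1 = a} := by
  refine card_nbij' (fun b => (a, b)) Prod.snd (fun b hb => ?_) (fun p hp => ?_)
    (fun _ _ => rfl) (fun p hp => ?_)
  · simpa using (mem_filter.1 hb).2
  · obtain ⟨hpE, rfl⟩ := mem_filter.1 hp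
    simpa using ⟨(mem_product.1 (hE hpE)).2, hpE⟩
  · obtain ⟨-, rfl⟩ := mem_filter.1 hp
    rfl

theorem card_filter_card_left_nbhd_le (hE : E ⊆ A ×ˢ B) (k : ℕ) :
    #{p ∈ E | #{a ∈ A | (a, p.2) ∈ E} ≤ k} ≤ #B * k := by
  simp only [card_filter_mem_eq_card_filter_snd hE]
  exact card_filter_card_fiber_le (fun p hp => (mem_product.1 (hE hp)).2) k

theorem card_filter_card_right_nbhd_le (hE : E ⊆ A ×ˢ B) (k : ℕ) :
    #{p ∈ E | #{b ∈ B | (p.1, b) ∈ E} ≤ k} ≤ #A * k := by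
  simp only [card_filter_mem_eq_card_filter_fst hE]
  exact card_filter_card_fiber_le (fun p hp => (mem_product.1 (hE hp)).1) k

theorem IsBicliqueFree.card_filter_nbhds_covered_le (hE : E ⊆ A ×ˢ B)
    (hfree : IsBicliqueFree A B E t) {N : Finset (Finset α)} {N' : Finset (Finset β)}
    (hN : ∀ T ∈ N, T ⊆ A ∧ #T = t) (hN' : ∀ T' ∈ N', T' ⊆ B ∧ #T' = t) :
    #{p ∈ E | (∃ T ∈ N, T ⊆ {a ∈ A | (a, p.2) ∈ E}) ∧
      ∃ T' ∈ N', T' ⊆ {b ∈ B | (p.1, b) ∈ E}} ≤ #N * #N' * (t - 1) ^ 2 := by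
  set X : Finset β → Finset α := fun T' => {a ∈ A | ∀ b ∈ T', (a, b) ∈ E}
  set Y : Finset α → Finset β := fun T => {b ∈ B | ∀ a ∈ T, (a, b) ∈ E}
  have hcover : {p ∈ E | (∃ T ∈ N, T ⊆ {a ∈ A | (a, p.2) ∈ E}) ∧
      ∃ T' ∈ N', T' ⊆ {b ∈ B | (p.1, b) ∈ E}} ⊆ (N ×ˢ N').biUnion fun q => X q.2 ×ˢ Y q.1 := by
    intro p hp
    obtain ⟨hpE, ⟨T, hTN, hT⟩, ⟨T', hT'N, hT'⟩⟩ := mem_filter.1 hp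
    obtain ⟨ha, hb⟩ := mem_product.1 (hE hpE)
    refine mem_biUnion.2 ⟨(T, T'), mem_product.2 ⟨hTN, hT'N⟩, mem_product.2 ⟨?_, ?_⟩⟩
    · exact mem_filter.2 ⟨ha, fun b hb => (mem_filter.1 (hT' hb)).2⟩
    · exact mem_filter.2 ⟨hb, fun a ha => (mem_filter.1 (hT ha)).2⟩
  have hblock : ∀ q ∈ N ×ˢ N', #(X q.2 ×ˢ Y q.1) ≤ (t - 1) ^ 2 := by
    intro q hq
    obtain ⟨hq1, hq2⟩ := mem_product.1 hq
    rw [card_product, sq]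
    exact Nat.mul_le_mul
      (Nat.le_sub_one_of_lt (hfree.card_commonNbhd_left_lt (hN' _ hq2).1 (hN' _ hq2).2))
      (Nat.le_sub_one_of_lt (hfree.card_commonNbhd_right_lt (hN _ hq1).1 (hN _ hq1).2))
  calc _ ≤ #((N ×ˢ N').biUnion fun q => X q.2 ×ˢ Y q.1) := card_le_card hcover
    _ ≤ ∑ q ∈ N ×ˢ N', #(X q.2 ×ˢ Y q.1) := card_biUnion_le
    _ ≤ ∑ _q ∈ N ×ˢ N', (t - 1) ^ 2 := sum_le_sum hblock
    _ = #N * #N' * (t - 1) ^ 2 := by rw [sum_const, smul_eq_mul, card_product]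

end Bipartite

theorem stmt_2_general {α β : Type*} [DecidableEq α] [DecidableEq β]
    (t m n s s' : ℕ)
    (A : Finset α) (B : Finset β) (E : Finset (α × β))
    (hE : E ⊆ A ×ˢ B) (hm : A.card = m) (hn : B.card = n)
    (hfree : ¬ ∃ (S : Finset α) (T : Finset β), S ⊆ A ∧ T ⊆ B ∧
      S.card = t ∧ T.card = t ∧ ∀ a ∈ S, ∀ b ∈ T, (a, b) ∈ E)
    (ε ε' : ℝ)
    (N : Finset (Finset α)) (hs : N.card = s)
    (hNsub : ∀ T ∈ N, T ⊆ A ∧ T.card = t)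
    (hnet : ∀ b ∈ B, ε * m ≤ ((A.filter fun a => (a, b) ∈ E).card : ℝ) →
      ∃ T ∈ N, T ⊆ A.filter fun a => (a, b) ∈ E)
    (N' : Finset (Finset β)) (hs' : N'.card = s')
    (hN'sub : ∀ T' ∈ N', T' ⊆ B ∧ T'.card = t)
    (hnet' : ∀ a ∈ A, ε' * n ≤ ((B.filter fun b => (a, b) ∈ E).card : ℝ) →
      ∃ T' ∈ N', T' ⊆ B.filter fun b => (a, b) ∈ E) :
    E.card ≤ n * ⌊ε * (m : ℝ)⌋₊ + m * ⌊ε' * (n : ℝ)⌋₊ + s * s' * (t - 1) ^ 2 := by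
  have hcover : E ⊆ {p ∈ E | #{a ∈ A | (a, p.2) ∈ E} ≤ ⌊ε * (m : ℝ)⌋₊} ∪
      {p ∈ E | #{b ∈ B | (p.1, b) ∈ E} ≤ ⌊ε' * (n : ℝ)⌋₊} ∪
      {p ∈ E | (∃ T ∈ N, T ⊆ {a ∈ A | (a, p.2) ∈ E}) ∧
        ∃ T' ∈ N', T' ⊆ {b ∈ B | (p.1, b) ∈ E}} := by
    intro p hp
    obtain ⟨ha, hb⟩ := mem_product.1 (hE hp)
    simp only [mem_union, mem_filter, hp, true_and]
    by_cases hlow : (#{a ∈ A | (a, p.2) ∈ E} : ℝ) < ε * m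
    · exact .inl (.inl (Nat.le_floor hlow.le))
    by_cases hlow' : (#{b ∈ B | (p.1, b) ∈ E} : ℝ) < ε' * n
    · exact .inl (.inr (Nat.le_floor hlow'.le))
    exact .inr ⟨hnet _ hb (not_lt.1 hlow), hnet' _ ha (not_lt.1 hlow')⟩
  calc E.card ≤ _ := card_le_card hcover
    _ ≤ _ := (card_union_le _ _).trans (Nat.add_le_add_right (card_union_le _ _) _)
    _ ≤ _ := by
      gcongr
      · exact hn ▸ card_filter_card_left_nbhd_le hE _
      · exact hm ▸ card_filter_card_right_nbhd_le hE _
      · exact hs ▸ hs' ▸ IsBicliqueFree.card_filter_nbhds_covered_le hE hfree hNsub hN'sub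

theorem stmt_2 {α β : Type*} [DecidableEq α] [DecidableEq β]
    (t m n s s' : ℕ) (ht : 2 ≤ t)
    (A : Finset α) (B : Finset β) (E : Finset (α × β))
    (hE : E ⊆ A ×ˢ B) (hm : A.card = m) (hn : B.card = n)
    (hfree : ¬ ∃ (S : Finset α) (T : Finset β), S ⊆ A ∧ T ⊆ B ∧
      S.card = t ∧ T.card = t ∧ ∀ a ∈ S, ∀ b ∈ T, (a, b) ∈ E)
    (ε ε' : ℝ) (hε0 : 0 < ε) (hε1 : ε < 1) (hε'0 : 0 < ε') (hε'1 : ε' < 1)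
    (N : Finset (Finset α)) (hs : N.card = s)
    (hNsub : ∀ T ∈ N, T ⊆ A ∧ T.card = t)
    (hnet : ∀ b ∈ B, ε * m ≤ ((A.filter fun a => (a, b) ∈ E).card : ℝ) →
      ∃ T ∈ N, T ⊆ A.filter fun a => (a, b) ∈ E)
    (N' : Finset (Finset β)) (hs' : N'.card = s')
    (hN'sub : ∀ T' ∈ N', T' ⊆ B ∧ T'.card = t)
    (hnet' : ∀ a ∈ A, ε' * n ≤ ((B.filter fun b => (a, b) ∈ E).card : ℝ) →
      ∃ T' ∈ N', T' ⊆ B.filter fun b => (a, b) ∈ E) :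
    E.card ≤ n * ⌊ε * (m : ℝ)⌋₊ + m * ⌊ε' * (n : ℝ)⌋₊ + s * s' * (t - 1) ^ 2 :=
  stmt_2_general t m n s s' A B E hE hm hn hfree ε ε' N hs hNsub hnet N' hs' hN'sub hnet'
end

section
/- Let t ≥ 2 and let G_{A,B} be a K_{t,t}-free bipartite graph with |A| = m and |B| = n, and let 1 ≤ k ≤ m−1 and 1 ≤ ℓ ≤ n−1 be integers. Suppose N is a family of f t-element subsets of A such that every b ∈ B with deg(b) ≥ k has some T ∈ N with T ⊆ N(b), and N* is a family of f* t-element subsets of B such that every a ∈ A with deg(a) ≥ ℓ has some T* ∈ N* with T* ⊆ N(a). Let A' = {a ∈ A : deg(a) ≥ ℓ} and B' = {b ∈ B : deg(b) ≥ k}, and let G[A',B'] denote the induced bipartite subgraph on A' and B'. Then |A'| ≤ (t−1)·f*, |B'| ≤ (t−1)·f, and |E(G)| ≤ (k−1)·n + (ℓ−1)·m + |E(G[A',B'])|. -/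
open scoped Classical
open Finset

/-!
Every `a ∈ A'` has some `T* ∈ N*` inside its neighbourhood, and K_{t,t}-freeness allows at most
`t - 1` vertices to have a common `t`-set of neighbours, so `|A'| ≤ (t - 1) f*`; symmetrically for
`B'`. An edge not inside `G[A', B']` has an endpoint `b ∉ B'` (degree `≤ k - 1`) or `a ∉ A'`
(degree `≤ ℓ - 1`), which gives the edge bound.
-/

namespace Finset

variable {α β γ : Type*}

theorem card_le_mul_card_of_forall_exists {s : Finset α} {𝒩 : Finset γ}
    {P : γ → α → Prop} [∀ T, DecidablePred (P T)] {c : ℕ} (hcover : ∀ a ∈ s, ∃ T ∈ 𝒩, P T a)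
    (hfiber : ∀ T ∈ 𝒩, #{a ∈ s | P T a} ≤ c) :
    #s ≤ c * #𝒩 := by
  have hsub : s ⊆ 𝒩.biUnion fun T => {a ∈ s | P T a} := fun a ha => by
    obtain ⟨T, hT, hPT⟩ := hcover a ha
    exact mem_biUnion.mpr ⟨T, hT, mem_filter.mpr ⟨ha, hPT⟩⟩
  calc #s ≤ #(𝒩.biUnion fun T => {a ∈ s | P T a}) := card_le_card hsub
    _ ≤ #𝒩 * c := card_biUnion_le_card_mul _ _ _ hfiber
    _ = c * #𝒩 := mul_comm _ _

end Finset

section Biclique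

variable {α β : Type*}

def HasBiclique (r : α → β → Prop) (A : Finset α) (B : Finset β) (t : ℕ) : Prop :=
  ∃ (S : Finset α) (T : Finset β), S ⊆ A ∧ T ⊆ B ∧
    #S = t ∧ #T = t ∧ ∀ a ∈ S, ∀ b ∈ T, r a b

theorem hasBiclique_flip {r : α → β → Prop} {A : Finset α} {B : Finset β} {t : ℕ} :
    HasBiclique (flip r) B A t ↔ HasBiclique r A B t := by
  constructor
  · rintro ⟨T, S, hT, hS, hTcard, hScard, hr⟩
    exact ⟨S, T, hS, hT, hScard, hTcard, fun a ha b hb => hr b hb a ha⟩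
  · rintro ⟨S, T, hS, hT, hScard, hTcard, hr⟩
    exact ⟨T, S, hT, hS, hTcard, hScard, fun b hb a ha => hr a ha b hb⟩

theorem card_filter_forall_lt_of_not_hasBiclique {r : α → β → Prop} {A : Finset α}
    {B : Finset β} {t : ℕ} (hfree : ¬ HasBiclique r A B t) {s : Finset α} (hs : s ⊆ A)
    {T : Finset β} (hT : T ⊆ B) (hTcard : #T = t) :
    #{a ∈ s | ∀ b ∈ T, r a b} < t := by
  by_contra! hle
  obtain ⟨S, hS, hScard⟩ := exists_subset_card_eq hle
  refine hfree ⟨S, T, fun a ha => hs (mem_filter.mp (hS ha)).1, hT, hScard, hTcard, ?_⟩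
  exact fun a ha => (mem_filter.mp (hS ha)).2

theorem card_le_mul_card_of_not_hasBiclique {r : α → β → Prop} {A : Finset α}
    {B : Finset β} {t : ℕ} (hfree : ¬ HasBiclique r A B t) {s : Finset α} (hs : s ⊆ A)
    {𝒩 : Finset (Finset β)} (h𝒩 : ∀ T ∈ 𝒩, T ⊆ B ∧ #T = t)
    (hnet : ∀ a ∈ s, ∃ T ∈ 𝒩, ∀ b ∈ T, r a b) :
    #s ≤ (t - 1) * #𝒩 :=
  card_le_mul_card_of_forall_exists hnet fun T hT =>
    Nat.le_sub_one_of_lt <|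
      card_filter_forall_lt_of_not_hasBiclique hfree hs (h𝒩 T hT).1 (h𝒩 T hT).2

end Biclique

section EdgeCount

variable {α β : Type*} [DecidableEq α] [DecidableEq β] {A : Finset α} {B : Finset β}
  {E : Finset (α × β)}

theorem card_filter_snd_eq_le (hE : E ⊆ A ×ˢ B) (b : β) :
    #{p ∈ E | p.2 = b} ≤ #{a ∈ A | (a, b) ∈ E} := by
  have hsub : {p ∈ E | p.2 = b} ⊆ {a ∈ A | (a, b) ∈ E} ×ˢ {b} := fun p hp => by
    obtain ⟨hpE, rfl⟩ := mem_filter.mp hp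
    exact mem_product.mpr
      ⟨mem_filter.mpr ⟨(mem_product.mp (hE hpE)).1, hpE⟩, mem_singleton_self _⟩
  simpa using card_le_card hsub

theorem card_filter_fst_eq_le (hE : E ⊆ A ×ˢ B) (a : α) :
    #{p ∈ E | p.1 = a} ≤ #{b ∈ B | (a, b) ∈ E} := by
  have hsub : {p ∈ E | p.1 = a} ⊆ {a} ×ˢ {b ∈ B | (a, b) ∈ E} := fun p hp => by
    obtain ⟨hpE, rfl⟩ := mem_filter.mp hp
    exact mem_product.mpr
      ⟨mem_singleton_self _, mem_filter.mpr ⟨(mem_product.mp (hE hpE)).2, hpE⟩⟩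
  simpa using card_le_card hsub

theorem card_filter_snd_le (hE : E ⊆ A ×ˢ B) {P : β → Prop} [DecidablePred P] {c : ℕ}
    (hdeg : ∀ b ∈ B, P b → #{a ∈ A | (a, b) ∈ E} ≤ c) :
    #{p ∈ E | P p.2} ≤ c * #B := by
  refine card_le_mul_card_image_of_maps_to (f := Prod.snd)
    (fun p hp => (mem_product.mp (hE (mem_filter.mp hp).1)).2) c fun b hb => ?_
  by_cases hPb : P b
  · calc #{p ∈ {p ∈ E | P p.2} | p.2 = b} ≤ #{p ∈ E | p.2 = b} :=
          card_le_card (filter_subset_filter _ (filter_subset _ _))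
      _ ≤ #{a ∈ A | (a, b) ∈ E} := card_filter_snd_eq_le hE b
      _ ≤ c := hdeg b hb hPb
  · rw [filter_filter, filter_false_of_mem fun p _ ⟨hP, hpb⟩ => hPb (hpb ▸ hP), card_empty]
    exact Nat.zero_le c

theorem card_filter_fst_le (hE : E ⊆ A ×ˢ B) {P : α → Prop} [DecidablePred P] {c : ℕ}
    (hdeg : ∀ a ∈ A, P a → #{b ∈ B | (a, b) ∈ E} ≤ c) :
    #{p ∈ E | P p.1} ≤ c * #A := by
  refine card_le_mul_card_image_of_maps_to (f := Prod.fst)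
    (fun p hp => (mem_product.mp (hE (mem_filter.mp hp).1)).1) c fun a ha => ?_
  by_cases hPa : P a
  · calc #{p ∈ {p ∈ E | P p.1} | p.1 = a} ≤ #{p ∈ E | p.1 = a} :=
          card_le_card (filter_subset_filter _ (filter_subset _ _))
      _ ≤ #{b ∈ B | (a, b) ∈ E} := card_filter_fst_eq_le hE a
      _ ≤ c := hdeg a ha hPa
  · rw [filter_filter, filter_false_of_mem fun p _ ⟨hP, hpa⟩ => hPa (hpa ▸ hP), card_empty]
    exact Nat.zero_le c

theorem card_le_of_degree_le (hE : E ⊆ A ×ˢ B) (A' : Finset α) (B' : Finset β) {k ℓ : ℕ}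
    (hB' : ∀ b ∈ B, b ∉ B' → #{a ∈ A | (a, b) ∈ E} ≤ k)
    (hA' : ∀ a ∈ A, a ∉ A' → #{b ∈ B | (a, b) ∈ E} ≤ ℓ) :
    #E ≤ k * #B + ℓ * #A + #{p ∈ E | p.1 ∈ A' ∧ p.2 ∈ B'} := by
  have hcover :
      E ⊆ {p ∈ E | p.2 ∉ B'} ∪ {p ∈ E | p.1 ∉ A'} ∪ {p ∈ E | p.1 ∈ A' ∧ p.2 ∈ B'} :=
    fun p hp => by simp only [mem_union, mem_filter]; tauto
  calc #E
        ≤ #{p ∈ E | p.2 ∉ B'} + #{p ∈ E | p.1 ∉ A'} + #{p ∈ E | p.1 ∈ A' ∧ p.2 ∈ B'} :=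
        (card_le_card hcover).trans <|
          (card_union_le _ _).trans (Nat.add_le_add_right (card_union_le _ _) _)
    _ ≤ k * #B + ℓ * #A + #{p ∈ E | p.1 ∈ A' ∧ p.2 ∈ B'} := by
      gcongr
      · exact card_filter_snd_le hE hB'
      · exact card_filter_fst_le hE hA'

end EdgeCount

theorem stmt_3_general {α β : Type*} [DecidableEq α] [DecidableEq β]
    (t m n k ℓ f fstar : ℕ)
    (A : Finset α) (B : Finset β) (E : Finset (α × β))
    (hE : E ⊆ A ×ˢ B) (hm : A.card = m) (hn : B.card = n)
    (hfree : ¬ ∃ (S : Finset α) (T : Finset β), S ⊆ A ∧ T ⊆ B ∧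
      S.card = t ∧ T.card = t ∧ ∀ a ∈ S, ∀ b ∈ T, (a, b) ∈ E)
    (N : Finset (Finset α)) (hf : N.card = f)
    (hNsub : ∀ T ∈ N, T ⊆ A ∧ T.card = t)
    (hnet : ∀ b ∈ B, k ≤ (A.filter fun a => (a, b) ∈ E).card →
      ∃ T ∈ N, T ⊆ A.filter fun a => (a, b) ∈ E)
    (Nstar : Finset (Finset β)) (hfstar : Nstar.card = fstar)
    (hNstarsub : ∀ T ∈ Nstar, T ⊆ B ∧ T.card = t)
    (hnetstar : ∀ a ∈ A, ℓ ≤ (B.filter fun b => (a, b) ∈ E).card →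
      ∃ T ∈ Nstar, T ⊆ B.filter fun b => (a, b) ∈ E) :
    (A.filter fun a => ℓ ≤ (B.filter fun b => (a, b) ∈ E).card).card ≤ (t - 1) * fstar ∧
    (B.filter fun b => k ≤ (A.filter fun a => (a, b) ∈ E).card).card ≤ (t - 1) * f ∧
    E.card ≤ (k - 1) * n + (ℓ - 1) * m +
      (E.filter fun p =>
        p.1 ∈ (A.filter fun a => ℓ ≤ (B.filter fun b => (a, b) ∈ E).card) ∧
        p.2 ∈ (B.filter fun b => k ≤ (A.filter fun a => (a, b) ∈ E).card)).card := by
  subst hm hn hf hfstar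
  refine ⟨?_, ?_, ?_⟩
  · refine card_le_mul_card_of_not_hasBiclique hfree (filter_subset _ _) hNstarsub
      fun a ha => ?_
    obtain ⟨T, hT, hTsub⟩ := hnetstar a (mem_filter.mp ha).1 (mem_filter.mp ha).2
    exact ⟨T, hT, fun b hb => (mem_filter.mp (hTsub hb)).2⟩
  · refine card_le_mul_card_of_not_hasBiclique (r := flip fun a b => (a, b) ∈ E)
      (hasBiclique_flip.not.mpr hfree) (filter_subset _ _) hNsub fun b hb => ?_
    obtain ⟨T, hT, hTsub⟩ := hnet b (mem_filter.mp hb).1 (mem_filter.mp hb).2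
    exact ⟨T, hT, fun a ha => (mem_filter.mp (hTsub ha)).2⟩
  · refine card_le_of_degree_le hE _ _ (fun b hb hbB' => ?_) fun a ha haA' => ?_
    · have := mt (mem_filter.mpr ⟨hb, ·⟩) hbB'
      omega
    · have := mt (mem_filter.mpr ⟨ha, ·⟩) haA'
      omega

theorem stmt_3 {α β : Type*} [DecidableEq α] [DecidableEq β]
    (t m n k ℓ f fstar : ℕ) (ht : 2 ≤ t)
    (A : Finset α) (B : Finset β) (E : Finset (α × β))
    (hE : E ⊆ A ×ˢ B) (hm : A.card = m) (hn : B.card = n)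
    (hk1 : 1 ≤ k) (hk2 : k ≤ m - 1) (hℓ1 : 1 ≤ ℓ) (hℓ2 : ℓ ≤ n - 1)
    (hfree : ¬ ∃ (S : Finset α) (T : Finset β), S ⊆ A ∧ T ⊆ B ∧
      S.card = t ∧ T.card = t ∧ ∀ a ∈ S, ∀ b ∈ T, (a, b) ∈ E)
    (N : Finset (Finset α)) (hf : N.card = f)
    (hNsub : ∀ T ∈ N, T ⊆ A ∧ T.card = t)
    (hnet : ∀ b ∈ B, k ≤ (A.filter fun a => (a, b) ∈ E).card →
      ∃ T ∈ N, T ⊆ A.filter fun a => (a, b) ∈ E)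
    (Nstar : Finset (Finset β)) (hfstar : Nstar.card = fstar)
    (hNstarsub : ∀ T ∈ Nstar, T ⊆ B ∧ T.card = t)
    (hnetstar : ∀ a ∈ A, ℓ ≤ (B.filter fun b => (a, b) ∈ E).card →
      ∃ T ∈ Nstar, T ⊆ B.filter fun b => (a, b) ∈ E) :
    (A.filter fun a => ℓ ≤ (B.filter fun b => (a, b) ∈ E).card).card ≤ (t - 1) * fstar ∧
    (B.filter fun b => k ≤ (A.filter fun a => (a, b) ∈ E).card).card ≤ (t - 1) * f ∧
    E.card ≤ (k - 1) * n + (ℓ - 1) * m +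
      (E.filter fun p =>
        p.1 ∈ (A.filter fun a => ℓ ≤ (B.filter fun b => (a, b) ∈ E).card) ∧
        p.2 ∈ (B.filter fun b => k ≤ (A.filter fun a => (a, b) ∈ E).card)).card :=
  stmt_3_general t m n k ℓ f fstar A B E hE hm hn hfree N hf hNsub hnet Nstar hfstar hNstarsub
    hnetstar
end

section
/- Let H = (V, 𝓔) be a hypergraph on n vertices, let t ≥ 1 be an integer, let s be a natural number, and let ε ∈ (0,1) satisfy εn ≥ 2t. Suppose that for every subset V' ⊆ V the induced subhypergraph (V', {e ∩ V' : e ∈ 𝓔}) admits an (ε/2)-net of size at most s, i.e., a set S' ⊆ V' of size at most s meeting every set e ∩ V' with |e ∩ V'| ≥ (ε/2)|V'|. Then there exists a set S ⊆ V with |S| ≤ t·s such that every hyperedge e ∈ 𝓔 with |e| ≥ εn satisfies |e ∩ S| ≥ t. -/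
open scoped Classical
open Finset

theorem stmt_5 {α : Type*} [DecidableEq α]
    (V : Finset α) (𝓔 : Finset (Finset α)) (h𝓔 : ∀ e ∈ 𝓔, e ⊆ V)
    (n : ℕ) (hn : V.card = n) (t s : ℕ) (ht : 1 ≤ t)
    (ε : ℝ) (hε0 : 0 < ε) (hε1 : ε < 1) (hεn : 2 * (t : ℝ) ≤ ε * n)
    (hnet : ∀ V' ⊆ V, ∃ S' ⊆ V', S'.card ≤ s ∧
      ∀ e ∈ 𝓔, (ε / 2) * V'.card ≤ ((e ∩ V').card : ℝ) → ((e ∩ V') ∩ S').Nonempty) :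
    ∃ S ⊆ V, S.card ≤ t * s ∧
      ∀ e ∈ 𝓔, ε * n ≤ (e.card : ℝ) → t ≤ (e ∩ S).card := by
  classical
  have hnet' : ∀ T : Finset α, ∃ S' ⊆ V \ T, S'.card ≤ s ∧
      ∀ e ∈ 𝓔, (ε / 2) * (V \ T).card ≤ ((e ∩ (V \ T)).card : ℝ) →
        ((e ∩ (V \ T)) ∩ S').Nonempty :=
    fun T => hnet (V \ T) sdiff_subset
  choose net hnetsub hnetcard hnethit using hnet'
  set F : ℕ → Finset α := fun i => Nat.rec ∅ (fun _ T => T ∪ net T) i with hF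
  have hFs : ∀ i, F (i+1) = F i ∪ net (F i) := fun i => rfl
  have hFV : ∀ i, F i ⊆ V := by
    intro i; induction i with
    | zero => simp [hF]
    | succ i ih => rw [hFs]; exact union_subset ih ((hnetsub _).trans sdiff_subset)
  have hFcard : ∀ i, (F i).card ≤ i * s := by
    intro i; induction i with
    | zero => simp [hF]
    | succ i ih =>
      rw [hFs]
      calc (F i ∪ net (F i)).card ≤ (F i).card + (net (F i)).card := card_union_le _ _
        _ ≤ i * s + s := Nat.add_le_add ih (hnetcard _)
        _ = (i+1) * s := by ring
  have hFmono : ∀ i, F i ⊆ F (i+1) := fun i => by rw [hFs]; exact subset_union_left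
  have key : ∀ e ∈ 𝓔, ε * n ≤ (e.card : ℝ) → ∀ i, min i t ≤ (e ∩ F i).card := by
    intro e he hecard i
    induction i with
    | zero => simp
    | succ i ih =>
      by_cases hlt : (e ∩ F i).card < t
      · -- show the net hits e ∩ (V \ F i)
        have heV : e ⊆ V := h𝓔 e he
        have hdiff : e ∩ (V \ F i) = e \ F i := by
          ext x; simp only [mem_inter, mem_sdiff]
          exact ⟨fun ⟨h1, _, h3⟩ => ⟨h1, h3⟩, fun ⟨h1, h3⟩ => ⟨h1, heV h1, h3⟩⟩
        have hcardsplit : (e \ F i).card = e.card - (e ∩ F i).card :=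
          card_sdiff_add_card_inter e (F i) ▸ by omega
        have hineq : (ε / 2) * (V \ F i).card ≤ ((e ∩ (V \ F i)).card : ℝ) := by
          rw [hdiff]
          have h1 : ((V \ F i).card : ℝ) ≤ n := by
            have := card_le_card (sdiff_subset : V \ F i ⊆ V)
            rw [hn] at this; exact_mod_cast this
          have h2 : ((e ∩ F i).card : ℝ) ≤ (t : ℝ) - 1 := by
            have : (e ∩ F i).card ≤ t - 1 := by omega
            have ht' : ((t : ℝ) - 1) = ((t - 1 : ℕ) : ℝ) := by
              have : (1:ℕ) ≤ t := ht
              push_cast [Nat.cast_sub this]; ring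
            rw [ht']; exact_mod_cast this
          have h3 : ((e \ F i).card : ℝ) = (e.card : ℝ) - ((e ∩ F i).card : ℝ) := by
            rw [hcardsplit]
            have : (e ∩ F i).card ≤ e.card := card_le_card inter_subset_left
            push_cast [Nat.cast_sub this]; ring
          have hε2 : 0 ≤ ε / 2 := by linarith
          calc (ε / 2) * ((V \ F i).card : ℝ) ≤ (ε / 2) * n := by
                exact mul_le_mul_of_nonneg_left h1 hε2
            _ ≤ ε * n - ((t:ℝ) - 1) := by linarith
            _ ≤ (e.card : ℝ) - ((e ∩ F i).card : ℝ) := by linarith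
            _ = ((e \ F i).card : ℝ) := h3.symm
        obtain ⟨x, hx⟩ := hnethit (F i) e he hineq
        simp only [mem_inter, mem_sdiff] at hx
        obtain ⟨⟨hxe, hxV, hxnF⟩, hxnet⟩ := hx
        have hsub : insert x (e ∩ F i) ⊆ e ∩ F (i+1) := by
          intro y hy
          rw [mem_insert] at hy
          rcases hy with rfl | hy
          · exact mem_inter.mpr ⟨hxe, by rw [hFs]; exact mem_union_right _ hxnet⟩
          · exact inter_subset_inter Subset.rfl (hFmono i) hy
        have hcardins : (insert x (e ∩ F i)).card = (e ∩ F i).card + 1 := by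
          rw [card_insert_of_notMem]; simp [hxnF]
        have := card_le_card hsub
        rw [hcardins] at this
        omega
      · have := card_le_card (inter_subset_inter Subset.rfl (hFmono i) : e ∩ F i ⊆ e ∩ F (i+1))
        omega
  refine ⟨F t, hFV t, hFcard t, fun e he hecard => ?_⟩
  have := key e he hecard t
  simpa using this
end

section
/- Let H = (V, 𝓔) be a hypergraph, let t ≥ 1 be an integer, let D ≥ 0 be a real number, and let S ⊆ V be a finite set. Suppose that for every nonempty subset V' ⊆ S the number of distinct traces of size exactly t satisfies |{e ∩ V' : e ∈ 𝓔, |e ∩ V'| = t}| ≤ D·|V'|. Then there exists a family N of t-element subsets of S with |N| ≤ t·D·|S| such that every hyperedge e ∈ 𝓔 with |e ∩ S| ≥ t contains some member of N. -/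
open scoped Classical
open Finset

theorem stmt_6 {α : Type*} [DecidableEq α]
    (V : Finset α) (𝓔 : Finset (Finset α)) (h𝓔 : ∀ e ∈ 𝓔, e ⊆ V)
    (t : ℕ) (ht : 1 ≤ t) (D : ℝ) (hD : 0 ≤ D)
    (S : Finset α) (hS : S ⊆ V)
    (htrace : ∀ V' ⊆ S, V'.Nonempty →
      ((((𝓔.image fun e => e ∩ V').filter fun f => f.card = t)).card : ℝ) ≤ D * V'.card) :
    ∃ N : Finset (Finset α), (∀ T ∈ N, T ⊆ S ∧ T.card = t) ∧
      (N.card : ℝ) ≤ t * D * S.card ∧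
      ∀ e ∈ 𝓔, t ≤ (e ∩ S).card → ∃ T ∈ N, T ⊆ e := by
  clear hS h𝓔
  revert htrace
  induction S using Finset.strongInduction with
  | _ S IH =>
  intro htrace
  rcases S.eq_empty_or_nonempty with rfl | hne
  · refine ⟨∅, by simp, by simp, fun e he h => absurd h ?_⟩
    simp only [Finset.inter_empty, Finset.card_empty]
    omega
  · set F : Finset (Finset α) := (𝓔.image fun e => e ∩ S).filter fun f => f.card = t with hF
    have hFmem : ∀ f ∈ F, f ⊆ S ∧ f.card = t := by
      intro f hf
      rw [hF, Finset.mem_filter, Finset.mem_image] at hf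
      obtain ⟨⟨e, _, rfl⟩, hcard⟩ := hf
      exact ⟨Finset.inter_subset_right, hcard⟩
    -- double counting
    have hsum : ∑ v ∈ S, (F.filter fun f => v ∈ f).card = t * F.card := by
      calc ∑ v ∈ S, (F.filter fun f => v ∈ f).card
          = ∑ v ∈ S, ∑ f ∈ F, if v ∈ f then 1 else 0 := by
            refine Finset.sum_congr rfl fun v hv => ?_
            rw [Finset.card_filter]
        _ = ∑ f ∈ F, ∑ v ∈ S, if v ∈ f then 1 else 0 := Finset.sum_comm
        _ = ∑ f ∈ F, (S.filter fun v => v ∈ f).card := by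
            refine Finset.sum_congr rfl fun f hf => ?_
            rw [Finset.card_filter]
        _ = ∑ f ∈ F, f.card := by
            refine Finset.sum_congr rfl fun f hf => ?_
            congr 1
            rw [Finset.filter_mem_eq_inter]
            exact Finset.inter_eq_right.mpr (hFmem f hf).1
        _ = ∑ f ∈ F, t := Finset.sum_congr rfl fun f hf => (hFmem f hf).2
        _ = t * F.card := by rw [Finset.sum_const, smul_eq_mul, mul_comm]
    have hFbound : (F.card : ℝ) ≤ D * S.card := htrace S le_rfl hne
    -- find a low degree vertex
    have hv : ∃ v ∈ S, ((F.filter fun f => v ∈ f).card : ℝ) ≤ t * D := by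
      by_contra hcon
      push_neg at hcon
      have h1 : (S.card : ℝ) * (t * D) < ∑ v ∈ S, ((F.filter fun f => v ∈ f).card : ℝ) := by
        calc (S.card : ℝ) * (t * D) = ∑ _v ∈ S, (t * D : ℝ) := by
              rw [Finset.sum_const, nsmul_eq_mul]
          _ < _ := Finset.sum_lt_sum_of_nonempty hne fun v hvS => hcon v hvS
      have h2 : ∑ v ∈ S, ((F.filter fun f => v ∈ f).card : ℝ) = (t : ℝ) * F.card := by
        rw [← Nat.cast_sum]
        exact_mod_cast congrArg (Nat.cast : ℕ → ℝ) hsum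
      rw [h2] at h1
      have h3 : (t : ℝ) * F.card ≤ (t : ℝ) * (D * S.card) :=
        mul_le_mul_of_nonneg_left hFbound (by positivity)
      nlinarith
    obtain ⟨v, hvS, hvdeg⟩ := hv
    have hss : S.erase v ⊂ S := Finset.erase_ssubset hvS
    obtain ⟨N', hN'1, hN'2, hN'3⟩ :=
      IH (S.erase v) hss (fun V' hV' hne' =>
        htrace V' (hV'.trans (Finset.erase_subset _ _)) hne')
    refine ⟨N' ∪ F.filter fun f => v ∈ f, ?_, ?_, ?_⟩
    · intro T hT
      rcases Finset.mem_union.mp hT with h | h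
      · exact ⟨(hN'1 T h).1.trans (Finset.erase_subset _ _), (hN'1 T h).2⟩
      · exact hFmem T (Finset.mem_of_mem_filter T h)
    · have hcard : ((S.erase v).card : ℝ) = (S.card : ℝ) - 1 := by
        rw [Finset.card_erase_of_mem hvS,
          Nat.cast_sub (Finset.card_pos.mpr hne), Nat.cast_one]
      calc ((N' ∪ F.filter fun f => v ∈ f).card : ℝ)
          ≤ (N'.card : ℝ) + ((F.filter fun f => v ∈ f).card : ℝ) := by
            exact_mod_cast Finset.card_union_le _ _
        _ ≤ t * D * ((S.card : ℝ) - 1) + t * D := by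
            rw [← hcard]; exact add_le_add hN'2 hvdeg
        _ = t * D * S.card := by ring
    · intro e he hcardeS
      by_cases hc : t ≤ (e ∩ S.erase v).card
      · obtain ⟨T, hT, hTe⟩ := hN'3 e he hc
        exact ⟨T, Finset.mem_union_left _ hT, hTe⟩
      · have hkey : e ∩ S.erase v = (e ∩ S).erase v := by
          ext x
          simp only [Finset.mem_inter, Finset.mem_erase]
          tauto
        have hve : v ∈ e := by
          by_contra hv'
          have : (e ∩ S).erase v = e ∩ S := by
            apply Finset.erase_eq_of_notMem
            simp [hv']
          rw [hkey, this] at hc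
          exact hc hcardeS
        have hvmem : v ∈ e ∩ S := Finset.mem_inter.mpr ⟨hve, hvS⟩
        have hct : (e ∩ S).card = t := by
          have := Finset.card_erase_of_mem hvmem
          rw [hkey, this] at hc
          omega
        refine ⟨e ∩ S, Finset.mem_union_right _ ?_, Finset.inter_subset_left⟩
        rw [Finset.mem_filter]
        exact ⟨Finset.mem_filter.mpr ⟨Finset.mem_image.mpr ⟨e, he, rfl⟩, hct⟩, hvmem⟩
end

section
/- Let t ≥ 2 be an integer, let C ≥ 1 be a real number, and let G_{A,B} be a bipartite graph with |A| ≤ n and |B| ≤ n. Suppose that for all subsets A' ⊆ A and B' ⊆ B and every integer ℓ ≥ 2t, the number of vertices of A' ∪ B' whose degree in the induced bipartite subgraph G[A',B'] is at least ℓ is at most C·t⁶·max(|A'|,|B'|)/ℓ. Then |E(G)| ≤ 8·C·t⁶·n. -/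
open scoped Classical
open Finset

theorem stmt_8 {α β : Type*} [DecidableEq α] [DecidableEq β]
    (t n : ℕ) (ht : 2 ≤ t) (C : ℝ) (hC : 1 ≤ C)
    (A : Finset α) (B : Finset β) (E : Finset (α × β)) (hE : E ⊆ A ×ˢ B)
    (hA : A.card ≤ n) (hB : B.card ≤ n)
    (hdeg : ∀ A' ⊆ A, ∀ B' ⊆ B, ∀ ℓ : ℕ, 2 * t ≤ ℓ →
      (((A'.filter fun a => ℓ ≤ (B'.filter fun b => (a, b) ∈ E).card).card
        + (B'.filter fun b => ℓ ≤ (A'.filter fun a => (a, b) ∈ E).card).card : ℕ) : ℝ)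
        ≤ C * (t : ℝ) ^ 6 * (max A'.card B'.card : ℕ) / ℓ) :
    (E.card : ℝ) ≤ 8 * C * (t : ℝ) ^ 6 * n := by
  set L : ℕ := ⌈2 * C * (t : ℝ) ^ 6⌉₊ with hLdef
  have htR : (2 : ℝ) ≤ (t : ℝ) := by exact_mod_cast ht
  have ht6 : (2 : ℝ) ^ 6 ≤ (t : ℝ) ^ 6 := by
    apply pow_le_pow_left₀ (by norm_num) htR
  have hCt : (1 : ℝ) ≤ C * (t : ℝ) ^ 6 := by nlinarith
  have hL1 : 2 * C * (t : ℝ) ^ 6 ≤ (L : ℝ) := Nat.le_ceil _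
  have hL2 : (L : ℝ) < 2 * C * (t : ℝ) ^ 6 + 1 := Nat.ceil_lt_add_one (by nlinarith)
  have hLpos : (0 : ℝ) < (L : ℝ) := by nlinarith
  have hL2t : 2 * t ≤ L := by
    have htnn : (0 : ℝ) ≤ (t : ℝ) := Nat.cast_nonneg _
    have htt : (t : ℝ) ≤ (t : ℝ) ^ 6 := le_self_pow₀ (by linarith) (by norm_num)
    have hCt6 : (t : ℝ) ^ 6 ≤ C * (t : ℝ) ^ 6 := le_mul_of_one_le_left (by positivity) hC
    have h1 : (2 * t : ℝ) ≤ (L : ℝ) := by push_cast; linarith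
    exact_mod_cast h1
  -- splitting lemma for a vertex a ∈ A'
  have splitA : ∀ (A' : Finset α) (B' : Finset β) (a : α), a ∈ A' →
      (E.filter fun p => p.1 ∈ A' ∧ p.2 ∈ B').card
        = (B'.filter fun b => (a, b) ∈ E).card
          + (E.filter fun p => p.1 ∈ A'.erase a ∧ p.2 ∈ B').card := by
    intro A' B' a ha
    have h1 : (E.filter fun p => p.1 ∈ A' ∧ p.2 ∈ B')
        = (E.filter fun p => p.1 = a ∧ p.2 ∈ B')
          ∪ (E.filter fun p => p.1 ∈ A'.erase a ∧ p.2 ∈ B') := by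
      ext p
      simp only [mem_filter, mem_union, mem_erase]
      constructor
      · rintro ⟨hpE, hpA, hpB⟩
        by_cases h : p.1 = a
        · exact Or.inl ⟨hpE, h, hpB⟩
        · exact Or.inr ⟨hpE, ⟨h, hpA⟩, hpB⟩
      · rintro (⟨hpE, h, hpB⟩ | ⟨hpE, ⟨hne, hpA⟩, hpB⟩)
        · exact ⟨hpE, h ▸ ha, hpB⟩
        · exact ⟨hpE, hpA, hpB⟩
    have hdisj : Disjoint (E.filter fun p => p.1 = a ∧ p.2 ∈ B')
        (E.filter fun p => p.1 ∈ A'.erase a ∧ p.2 ∈ B') := by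
      rw [Finset.disjoint_left]
      intro p hp1 hp2
      simp only [mem_filter, mem_erase] at hp1 hp2
      exact hp2.2.1.1 hp1.2.1
    have h2 : (E.filter fun p => p.1 = a ∧ p.2 ∈ B').card
        = (B'.filter fun b => (a, b) ∈ E).card := by
      refine Finset.card_bij' (fun p _ => p.2) (fun b _ => (a, b)) ?_ ?_ ?_ ?_
      · intro p hp
        simp only [mem_filter] at hp ⊢
        exact ⟨hp.2.2, hp.2.1 ▸ hp.1⟩
      · intro b hb
        simp only [mem_filter] at hb ⊢
        exact ⟨hb.2, trivial, hb.1⟩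
      · intro p hp
        simp only [mem_filter] at hp
        exact Prod.ext hp.2.1.symm rfl
      · intro b hb
        rfl
    rw [h1, card_union_of_disjoint hdisj, h2]
  -- splitting lemma for a vertex b ∈ B'
  have splitB : ∀ (A' : Finset α) (B' : Finset β) (b : β), b ∈ B' →
      (E.filter fun p => p.1 ∈ A' ∧ p.2 ∈ B').card
        = (A'.filter fun a => (a, b) ∈ E).card
          + (E.filter fun p => p.1 ∈ A' ∧ p.2 ∈ B'.erase b).card := by
    intro A' B' b hb
    have h1 : (E.filter fun p => p.1 ∈ A' ∧ p.2 ∈ B')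
        = (E.filter fun p => p.1 ∈ A' ∧ p.2 = b)
          ∪ (E.filter fun p => p.1 ∈ A' ∧ p.2 ∈ B'.erase b) := by
      ext p
      simp only [mem_filter, mem_union, mem_erase]
      constructor
      · rintro ⟨hpE, hpA, hpB⟩
        by_cases h : p.2 = b
        · exact Or.inl ⟨hpE, hpA, h⟩
        · exact Or.inr ⟨hpE, hpA, h, hpB⟩
      · rintro (⟨hpE, hpA, h⟩ | ⟨hpE, hpA, hne, hpB⟩)
        · exact ⟨hpE, hpA, h ▸ hb⟩
        · exact ⟨hpE, hpA, hpB⟩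
    have hdisj : Disjoint (E.filter fun p => p.1 ∈ A' ∧ p.2 = b)
        (E.filter fun p => p.1 ∈ A' ∧ p.2 ∈ B'.erase b) := by
      rw [Finset.disjoint_left]
      intro p hp1 hp2
      simp only [mem_filter, mem_erase] at hp1 hp2
      exact hp2.2.2.1 hp1.2.2
    have h2 : (E.filter fun p => p.1 ∈ A' ∧ p.2 = b).card
        = (A'.filter fun a => (a, b) ∈ E).card := by
      refine Finset.card_bij' (fun p _ => p.1) (fun a _ => (a, b)) ?_ ?_ ?_ ?_
      · intro p hp
        simp only [mem_filter] at hp ⊢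
        exact ⟨hp.2.1, hp.2.2 ▸ hp.1⟩
      · intro a ha
        simp only [mem_filter] at ha ⊢
        exact ⟨ha.2, ha.1, trivial⟩
      · intro p hp
        simp only [mem_filter] at hp
        exact Prod.ext rfl hp.2.2.symm
      · intro a ha
        rfl
    rw [h1, card_union_of_disjoint hdisj, h2]
  -- main degeneracy induction
  have key : ∀ N : ℕ, ∀ A' ⊆ A, ∀ B' ⊆ B, A'.card + B'.card ≤ N →
      (E.filter fun p => p.1 ∈ A' ∧ p.2 ∈ B').card ≤ L * (A'.card + B'.card) := by
    intro N
    induction N with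
    | zero =>
      intro A' hA' B' hB' hcard
      have h1 : A' = ∅ := card_eq_zero.mp (by omega)
      simp [h1]
    | succ N ih =>
      intro A' hA' B' hB' hcard
      by_cases hA0 : A' = ∅
      · simp [hA0]
      by_cases hB0 : B' = ∅
      · simp [hB0]
      have hA1 : 1 ≤ A'.card := card_pos.mpr (nonempty_of_ne_empty hA0)
      have hB1 : 1 ≤ B'.card := card_pos.mpr (nonempty_of_ne_empty hB0)
      have hd := hdeg A' hA' B' hB' L hL2t
      set cntA := (A'.filter fun a => L ≤ (B'.filter fun b => (a, b) ∈ E).card).card with hcA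
      set cntB := (B'.filter fun b => L ≤ (A'.filter fun a => (a, b) ∈ E).card).card with hcB
      have hmle : (max A'.card B'.card : ℕ) ≤ A'.card + B'.card := by omega
      have hm1 : 1 ≤ (max A'.card B'.card : ℕ) := by omega
      have hdiv : C * (t : ℝ) ^ 6 * ((max A'.card B'.card : ℕ) : ℝ) / (L : ℝ)
          ≤ ((max A'.card B'.card : ℕ) : ℝ) / 2 := by
        rw [div_le_div_iff₀ hLpos (by norm_num)]
        have hmnn : (0 : ℝ) ≤ ((max A'.card B'.card : ℕ) : ℝ) := Nat.cast_nonneg _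
        nlinarith
      have hsumR : (cntA : ℝ) + (cntB : ℝ) < (A'.card : ℝ) + (B'.card : ℝ) := by
        have hmR : ((max A'.card B'.card : ℕ) : ℝ) ≤ (A'.card : ℝ) + (B'.card : ℝ) := by
          exact_mod_cast hmle
        have hm1R : (1 : ℝ) ≤ ((max A'.card B'.card : ℕ) : ℝ) := by exact_mod_cast hm1
        have : (cntA : ℝ) + (cntB : ℝ) ≤ ((max A'.card B'.card : ℕ) : ℝ) / 2 := by
          calc (cntA : ℝ) + (cntB : ℝ) = ((cntA + cntB : ℕ) : ℝ) := by push_cast; ring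
            _ ≤ _ := hd
            _ ≤ _ := hdiv
        linarith
      have hsum : cntA + cntB < A'.card + B'.card := by exact_mod_cast hsumR
      have hcAle : cntA ≤ A'.card := card_filter_le _ _
      have hcBle : cntB ≤ B'.card := card_filter_le _ _
      rcases (by omega : cntA < A'.card ∨ cntB < B'.card) with hlt | hlt
      · -- there is a ∈ A' of low degree
        obtain ⟨a, haA', hadeg⟩ : ∃ a ∈ A', (B'.filter fun b => (a, b) ∈ E).card < L := by
          by_contra h
          push_neg at h
          have : (A'.filter fun a => L ≤ (B'.filter fun b => (a, b) ∈ E).card) = A' :=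
            filter_eq_self.mpr fun a ha => h a ha
          rw [hcA, this] at hlt
          omega
        have hsub : A'.erase a ⊆ A := (erase_subset a A').trans hA'
        have hcount : (A'.erase a).card + B'.card ≤ N := by
          rw [card_erase_of_mem haA']
          omega
        have hstep := ih (A'.erase a) hsub B' hB' hcount
        rw [splitA A' B' a haA']
        rw [card_erase_of_mem haA'] at hstep
        obtain ⟨k, hk⟩ : ∃ k, A'.card = k + 1 := ⟨A'.card - 1, by omega⟩
        rw [hk] at hstep ⊢
        simp only [Nat.add_sub_cancel] at hstep
        have heq : L * (k + 1 + B'.card) = L + L * (k + B'.card) := by ring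
        rw [heq]
        exact Nat.add_le_add hadeg.le hstep
      · -- there is b ∈ B' of low degree
        obtain ⟨b, hbB', hbdeg⟩ : ∃ b ∈ B', (A'.filter fun a => (a, b) ∈ E).card < L := by
          by_contra h
          push_neg at h
          have : (B'.filter fun b => L ≤ (A'.filter fun a => (a, b) ∈ E).card) = B' :=
            filter_eq_self.mpr fun b hb => h b hb
          rw [hcB, this] at hlt
          omega
        have hsub : B'.erase b ⊆ B := (erase_subset b B').trans hB'
        have hcount : A'.card + (B'.erase b).card ≤ N := by
          rw [card_erase_of_mem hbB']
          omega
        have hstep := ih A' hA' (B'.erase b) hsub hcount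
        rw [splitB A' B' b hbB']
        rw [card_erase_of_mem hbB'] at hstep
        obtain ⟨k, hk⟩ : ∃ k, B'.card = k + 1 := ⟨B'.card - 1, by omega⟩
        rw [hk] at hstep ⊢
        simp only [Nat.add_sub_cancel] at hstep
        have heq : L * (A'.card + (k + 1)) = L + L * (A'.card + k) := by ring
        rw [heq]
        exact Nat.add_le_add hbdeg.le hstep
  -- conclude
  have hEeq : E.filter (fun p => p.1 ∈ A ∧ p.2 ∈ B) = E := by
    apply filter_eq_self.mpr
    intro p hp
    have := hE hp
    rw [mem_product] at this
    exact this
  have hfin := key (A.card + B.card) A Subset.rfl B Subset.rfl le_rfl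
  rw [hEeq] at hfin
  have hR : (E.card : ℝ) ≤ (L : ℝ) * ((A.card : ℝ) + (B.card : ℝ)) := by
    have : (E.card : ℝ) ≤ ((L * (A.card + B.card) : ℕ) : ℝ) := by exact_mod_cast hfin
    push_cast at this
    linarith
  have hAn : (A.card : ℝ) ≤ (n : ℝ) := by exact_mod_cast hA
  have hBn : (B.card : ℝ) ≤ (n : ℝ) := by exact_mod_cast hB
  have hnn : (0 : ℝ) ≤ (n : ℝ) := Nat.cast_nonneg _
  have h2n : (A.card : ℝ) + (B.card : ℝ) ≤ 2 * (n : ℝ) := by linarith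
  have hcard0 : (0 : ℝ) ≤ (A.card : ℝ) + (B.card : ℝ) := by positivity
  calc (E.card : ℝ) ≤ (L : ℝ) * ((A.card : ℝ) + (B.card : ℝ)) := hR
    _ ≤ (L : ℝ) * (2 * n) := by
        exact mul_le_mul_of_nonneg_left h2n hLpos.le
    _ ≤ (2 * C * (t : ℝ) ^ 6 + 1) * (2 * n) := by
        apply mul_le_mul_of_nonneg_right hL2.le (by positivity)
    _ ≤ 8 * C * (t : ℝ) ^ 6 * n := by nlinarith
end

section
/- There exists an absolute constant c > 0 such that the following holds for every integer t ≥ 1. Let 𝓗 be a finite family of N horizontal segments in the plane whose y-coordinates are pairwise distinct. Then the number of subsets T ⊆ 𝓗 with |T| = 2t−1 for which there exists a vertical segment L with {h ∈ 𝓗 : h ∩ L ≠ ∅} = T is at most c·t⁵·N. -/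
open scoped Classical
open Finset

/-- A horizontal segment `[x₁,x₂] × {y}` with `x₁ ≤ x₂`. -/
structure HSeg where
  x1 : ℝ
  x2 : ℝ
  y : ℝ
  hx : x1 ≤ x2

/-- The set of points of a horizontal segment. -/
def HSeg.toSet (h : HSeg) : Set (ℝ × ℝ) :=
  Set.Icc h.x1 h.x2 ×ˢ ({h.y} : Set ℝ)

/-- A vertical segment `{x} × [y₁,y₂]` with `y₁ ≤ y₂`. -/
structure VSeg where
  x : ℝ
  y1 : ℝ
  y2 : ℝ
  hy : y1 ≤ y2

/-- The set of points of a vertical segment. -/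
def VSeg.toSet (v : VSeg) : Set (ℝ × ℝ) :=
  ({v.x} : Set ℝ) ×ˢ Set.Icc v.y1 v.y2

namespace Stmt10

noncomputable section

/-- rank of `f` in `A` by `y`-coordinate. -/
def rnk (A : Finset HSeg) (f : HSeg) : ℕ := (A.filter fun a => a.y ≤ f.y).card

/-- the `k` lowest elements of `A`. -/
def win (k : ℕ) (A : Finset HSeg) : Finset HSeg := A.filter fun f => rnk A f ≤ k

/-- segments of `𝓗` covering the vertical line at `e` (b = false) or just right of `e` (b = true). -/
def Scov (𝓗 : Finset HSeg) (e : ℝ) (b : Bool) : Finset HSeg :=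
  𝓗.filter fun g => g.x1 ≤ e ∧ (if b then e < g.x2 else e ≤ g.x2)

def Aset (𝓗 : Finset HSeg) (e : ℝ) (b : Bool) (h : HSeg) : Finset HSeg :=
  (Scov 𝓗 e b).filter fun f => h.y ≤ f.y

def Xset (𝓗 : Finset HSeg) : Finset ℝ := 𝓗.image HSeg.x1 ∪ 𝓗.image HSeg.x2

lemma Scov_subset (𝓗 : Finset HSeg) (e : ℝ) (b : Bool) : Scov 𝓗 e b ⊆ 𝓗 :=
  filter_subset _ _

lemma mem_Scov_false {𝓗 : Finset HSeg} {e : ℝ} {g : HSeg} :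
    g ∈ Scov 𝓗 e false ↔ g ∈ 𝓗 ∧ g.x1 ≤ e ∧ e ≤ g.x2 := by
  simp [Scov, mem_filter, and_assoc]

lemma mem_Scov_true {𝓗 : Finset HSeg} {e : ℝ} {g : HSeg} :
    g ∈ Scov 𝓗 e true ↔ g ∈ 𝓗 ∧ g.x1 ≤ e ∧ e < g.x2 := by
  simp [Scov, mem_filter, and_assoc]

lemma Aset_subset (𝓗 : Finset HSeg) (e : ℝ) (b : Bool) (h : HSeg) :
    Aset 𝓗 e b h ⊆ Scov 𝓗 e b := filter_subset _ _

lemma win_subset (k : ℕ) (A : Finset HSeg) : win k A ⊆ A := filter_subset _ _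

lemma mem_x1_Xset {𝓗 : Finset HSeg} {g : HSeg} (hg : g ∈ 𝓗) : g.x1 ∈ Xset 𝓗 :=
  mem_union_left _ (mem_image_of_mem _ hg)

lemma mem_x2_Xset {𝓗 : Finset HSeg} {g : HSeg} (hg : g ∈ 𝓗) : g.x2 ∈ Xset 𝓗 :=
  mem_union_right _ (mem_image_of_mem _ hg)

lemma rnk_le_of_subset {A B : Finset HSeg} (hAB : A ⊆ B) (f : HSeg) :
    rnk A f ≤ rnk B f :=
  card_le_card (filter_subset_filter _ hAB)

lemma rnk_mono {A : Finset HSeg} {f f' : HSeg} (h : f.y ≤ f'.y) :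
    rnk A f ≤ rnk A f' := by
  apply card_le_card
  intro a ha
  rw [mem_filter] at ha ⊢
  exact ⟨ha.1, ha.2.trans h⟩

lemma rnk_lt {A : Finset HSeg} {f f' : HSeg} (hf' : f' ∈ A) (h : f.y < f'.y) :
    rnk A f < rnk A f' := by
  apply card_lt_card
  constructor
  · intro a ha
    rw [mem_filter] at ha ⊢
    exact ⟨ha.1, ha.2.trans h.le⟩
  · intro hsub
    have : f' ∈ A.filter fun a => a.y ≤ f'.y := by
      rw [mem_filter]; exact ⟨hf', le_refl _⟩
    have := hsub this
    rw [mem_filter] at this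
    exact absurd this.2 (not_le.mpr h)

lemma rnk_pos {A : Finset HSeg} {f : HSeg} (hf : f ∈ A) : 1 ≤ rnk A f := by
  rw [Nat.one_le_iff_ne_zero, ← Nat.pos_iff_ne_zero]
  apply card_pos.mpr
  exact ⟨f, by rw [mem_filter]; exact ⟨hf, le_refl _⟩⟩

lemma win_down {k : ℕ} {A : Finset HSeg} {f a : HSeg} (hf : f ∈ win k A)
    (ha : a ∈ A) (hya : a.y ≤ f.y) : a ∈ win k A := by
  rw [win, mem_filter] at hf ⊢
  exact ⟨ha, le_trans (rnk_mono hya) hf.2⟩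

/-- addition step: if `T` is the `k`-window of the bigger set but not of the smaller,
some element of `T` is new. -/
lemma core_add {k : ℕ} {A A' T : Finset HSeg} (hAA : A ⊆ A')
    (hT : T = win k A') (hcard : T.card = k) (hne : T ≠ win k A) :
    ∃ g ∈ T, g ∉ A := by
  by_contra hcon
  push_neg at hcon
  have hTA : T ⊆ A := fun g hg => hcon g hg
  apply hne
  apply Finset.Subset.antisymm
  · intro f hf
    rw [win, mem_filter]
    refine ⟨hTA hf, ?_⟩
    have hf' : f ∈ win k A' := hT ▸ hf
    rw [win, mem_filter] at hf'
    exact le_trans (rnk_le_of_subset hAA f) hf'.2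
  · intro f hf
    by_contra hfT
    have hfA : f ∈ A := win_subset _ _ hf
    have hall : ∀ a ∈ T, a.y < f.y := by
      intro a ha
      by_contra hya
      push_neg at hya
      exact hfT (hT ▸ win_down (hT ▸ ha) (hAA hfA) hya)
    have hsub : insert f T ⊆ A.filter fun a => a.y ≤ f.y := by
      intro a ha
      rw [mem_insert] at ha
      rw [mem_filter]
      rcases ha with rfl | ha
      · exact ⟨hfA, le_refl _⟩
      · exact ⟨hTA ha, (hall a ha).le⟩
    have hk1 : k + 1 ≤ rnk A f := by
      rw [rnk]
      calc k + 1 = (insert f T).card := by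
            rw [card_insert_of_notMem hfT, hcard]
        _ ≤ _ := card_le_card hsub
    rw [win, mem_filter] at hf
    omega

lemma rnk_injOn {A : Finset HSeg}
    (hd : ∀ a ∈ A, ∀ b ∈ A, a.y = b.y → a = b) :
    Set.InjOn (rnk A) A := by
  intro a ha b hb hab
  rcases lt_trichotomy a.y b.y with h | h | h
  · exact absurd hab (Nat.ne_of_lt (rnk_lt hb h))
  · exact hd a ha b hb h
  · exact absurd hab.symm (Nat.ne_of_lt (rnk_lt ha h))

lemma rnk_image {A : Finset HSeg}
    (hd : ∀ a ∈ A, ∀ b ∈ A, a.y = b.y → a = b) :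
    A.image (rnk A) = Finset.Icc 1 A.card := by
  apply Finset.eq_of_subset_of_card_le
  · intro n hn
    rw [mem_image] at hn
    obtain ⟨a, ha, rfl⟩ := hn
    rw [Finset.mem_Icc]
    exact ⟨rnk_pos ha, card_le_card (filter_subset _ _)⟩
  · rw [Nat.card_Icc, Finset.card_image_of_injOn (rnk_injOn hd)]
    omega

lemma card_win_ge {k : ℕ} {A : Finset HSeg}
    (hd : ∀ a ∈ A, ∀ b ∈ A, a.y = b.y → a = b)
    (hk : 1 ≤ k) (hA : k ≤ A.card) : k ≤ (win k A).card := by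
  have hkimg : k ∈ A.image (rnk A) := by
    rw [rnk_image hd, Finset.mem_Icc]; exact ⟨hk, hA⟩
  rw [mem_image] at hkimg
  obtain ⟨a, ha, hra⟩ := hkimg
  calc k = rnk A a := hra.symm
    _ = (A.filter fun b => b.y ≤ a.y).card := rfl
    _ ≤ (win k A).card := by
        apply card_le_card
        intro b hb
        rw [mem_filter] at hb
        rw [win, mem_filter]
        exact ⟨hb.1, hra ▸ rnk_mono hb.2⟩

/-- removal step: if `T` is the `k`-window of the smaller set but not of the bigger,
some element of the bigger window got removed. -/
lemma core_remove {k : ℕ} {A A' T : Finset HSeg}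
    (hd : ∀ a ∈ A, ∀ b ∈ A, a.y = b.y → a = b) (hAA : A' ⊆ A)
    (hT : T = win k A') (hcard : T.card = k) (hk : 1 ≤ k) (hne : T ≠ win k A) :
    ∃ g ∈ win k A, g ∉ A' := by
  by_contra hcon
  push_neg at hcon
  have hWA' : win k A ⊆ A' := fun g hg => hcon g hg
  have hWT : win k A ⊆ T := by
    intro f hf
    have hfA' : f ∈ A' := hWA' hf
    rw [win, mem_filter] at hf
    rw [hT, win, mem_filter]
    exact ⟨hfA', le_trans (rnk_le_of_subset hAA f) hf.2⟩
  have hA : k ≤ A.card := by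
    calc k = T.card := hcard.symm
      _ ≤ A'.card := card_le_card (hT ▸ win_subset _ _)
      _ ≤ A.card := card_le_card hAA
  have h2 : T.card ≤ (win k A).card := by rw [hcard]; exact card_win_ge hd hk hA
  exact hne (Finset.eq_of_subset_of_card_le hWT h2).symm

/-- characterization of segment intersections. -/
lemma inter_nonempty_iff (g : HSeg) (L : VSeg) :
    (g.toSet ∩ L.toSet).Nonempty ↔
      ((g.x1 ≤ L.x ∧ L.x ≤ g.x2) ∧ (L.y1 ≤ g.y ∧ g.y ≤ L.y2)) := by
  constructor
  · rintro ⟨⟨px, py⟩, hp1, hp2⟩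
    simp only [HSeg.toSet, Set.mem_prod, Set.mem_Icc, Set.mem_singleton_iff] at hp1
    simp only [VSeg.toSet, Set.mem_prod, Set.mem_Icc, Set.mem_singleton_iff] at hp2
    obtain ⟨⟨h1, h2⟩, h3⟩ := hp1
    obtain ⟨h4, h5, h6⟩ := hp2
    subst h3; subst h4
    exact ⟨⟨h1, h2⟩, ⟨h5, h6⟩⟩
  · rintro ⟨⟨h1, h2⟩, h3, h4⟩
    exact ⟨(L.x, g.y), ⟨⟨h1, h2⟩, rfl⟩, ⟨rfl, h3, h4⟩⟩

/-- discretization: any covering set equals `Scov` at some event point. -/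
lemma discretize (𝓗 : Finset HSeg) (x : ℝ)
    (hex : ∃ g ∈ 𝓗, g.x1 ≤ x) :
    ∃ e ∈ Xset 𝓗, ∃ b : Bool,
      Scov 𝓗 e b = 𝓗.filter fun g => g.x1 ≤ x ∧ x ≤ g.x2 := by
  by_cases hx : x ∈ Xset 𝓗
  · exact ⟨x, hx, false, rfl⟩
  · obtain ⟨g0, hg0, hg0x⟩ := hex
    have hne : ((Xset 𝓗).filter fun p => p ≤ x).Nonempty :=
      ⟨g0.x1, by rw [mem_filter]; exact ⟨mem_x1_Xset hg0, hg0x⟩⟩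
    set e := ((Xset 𝓗).filter fun p => p ≤ x).max' hne with he
    have heX : e ∈ Xset 𝓗 := by
      have := ((Xset 𝓗).filter fun p => p ≤ x).max'_mem hne
      rw [mem_filter] at this; exact this.1
    have hex' : e ≤ x := by
      have := ((Xset 𝓗).filter fun p => p ≤ x).max'_mem hne
      rw [mem_filter] at this; exact this.2
    have hmax : ∀ p ∈ Xset 𝓗, p ≤ x → p ≤ e := by
      intro p hp hpx
      exact le_max' _ _ (by rw [mem_filter]; exact ⟨hp, hpx⟩)
    refine ⟨e, heX, true, ?_⟩
    apply filter_congr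
    intro g hg
    simp only [if_true]
    constructor
    · rintro ⟨h1, h2⟩
      refine ⟨h1.trans hex', ?_⟩
      by_contra hc
      push_neg at hc
      exact absurd (hmax g.x2 (mem_x2_Xset hg) hc.le) (not_le.mpr h2)
    · rintro ⟨h1, h2⟩
      refine ⟨hmax g.x1 (mem_x1_Xset hg) h1, ?_⟩
      have : e ≤ g.x2 := hex'.trans h2
      rcases this.lt_or_eq with h | h
      · exact h
      · exfalso
        apply hx
        have hxe : x = e := le_antisymm (h.symm ▸ h2) hex'
        exact hxe ▸ heX

/-- `T` is the window of size `k` above `h` whenever it's a `y`-range filter. -/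
lemma T_eq_win {k : ℕ} {T : Finset HSeg} {h : HSeg}
    (hcard : T.card = k) (hhT : h ∈ T) (hmin : ∀ f ∈ T, h.y ≤ f.y)
    {S : Finset HSeg} {y1 y2 : ℝ}
    (hTS : T = S.filter fun g => y1 ≤ g.y ∧ g.y ≤ y2) :
    T = win k (S.filter fun f => h.y ≤ f.y) := by
  set A := S.filter fun f => h.y ≤ f.y with hA
  have hy1 : y1 ≤ h.y := ((mem_filter.mp (hTS ▸ hhT)).2).1
  have hTA : T ⊆ A := by
    intro f hf
    rw [hA, mem_filter]
    exact ⟨(mem_filter.mp (hTS ▸ hf)).1, hmin f hf⟩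
  apply Finset.Subset.antisymm
  · intro f hf
    rw [win, mem_filter]
    refine ⟨hTA hf, ?_⟩
    have hfy2 : f.y ≤ y2 := (mem_filter.mp (hTS ▸ hf)).2.2
    have hsub : A.filter (fun a => a.y ≤ f.y) ⊆ T := by
      intro a ha
      obtain ⟨ha', hayf⟩ := mem_filter.mp ha
      obtain ⟨haS, hay⟩ := mem_filter.mp ha'
      rw [hTS, mem_filter]
      exact ⟨haS, hy1.trans hay, hayf.trans hfy2⟩
    calc rnk A f ≤ T.card := card_le_card hsub
      _ = k := hcard
  · intro f hf
    by_contra hfT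
    have hfA := win_subset _ _ hf
    have hall : ∀ a ∈ T, a.y < f.y := by
      intro a ha
      by_contra hya
      push_neg at hya
      apply hfT
      obtain ⟨hfS, hhf⟩ := mem_filter.mp hfA
      have ha' := mem_filter.mp (hTS ▸ ha)
      rw [hTS, mem_filter]
      exact ⟨hfS, hy1.trans hhf, hya.trans ha'.2.2⟩
    have hsub : insert f T ⊆ A.filter fun a => a.y ≤ f.y := by
      intro a ha
      rw [mem_insert] at ha
      rw [mem_filter]
      rcases ha with rfl | ha
      · exact ⟨hfA, le_refl _⟩
      · exact ⟨hTA ha, (hall a ha).le⟩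
    have hover : k + 1 ≤ rnk A f := by
      rw [rnk]
      calc k + 1 = (insert f T).card := by rw [card_insert_of_notMem hfT, hcard]
        _ ≤ _ := card_le_card hsub
    rw [win, mem_filter] at hf
    omega

def xev (p : HSeg × Bool × ℕ) : ℝ := if p.2.1 then p.1.x2 else p.1.x1

/-- the recovery predicate. -/
def Q (𝓗 : Finset HSeg) (k : ℕ) (T : Finset HSeg) (p : HSeg × Bool × ℕ) : Prop :=
  ∃ h : HSeg, h ∈ Scov 𝓗 (xev p) false ∧ h.y ≤ p.1.y ∧
    p.2.2 = ((Scov 𝓗 (xev p) false).filter fun f => h.y ≤ f.y ∧ f.y ≤ p.1.y).card ∧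
    T = win k (Aset 𝓗 (xev p) p.2.1 h)

lemma Q_inj {𝓗 : Finset HSeg} {k : ℕ}
    (hd : ∀ a ∈ 𝓗, ∀ b ∈ 𝓗, a.y = b.y → a = b)
    {T T' : Finset HSeg} {p : HSeg × Bool × ℕ}
    (h1 : Q 𝓗 k T p) (h2 : Q 𝓗 k T' p) : T = T' := by
  obtain ⟨h, hS, hy, hpos, hwin⟩ := h1
  obtain ⟨h', hS', hy', hpos', hwin'⟩ := h2
  have key : ∀ a b : HSeg, a ∈ Scov 𝓗 (xev p) false →
      a.y ≤ p.1.y → a.y < b.y →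
      ((Scov 𝓗 (xev p) false).filter fun f => b.y ≤ f.y ∧ f.y ≤ p.1.y).card <
      ((Scov 𝓗 (xev p) false).filter fun f => a.y ≤ f.y ∧ f.y ≤ p.1.y).card := by
    intro a b haS hay hab
    apply card_lt_card
    constructor
    · intro f hf
      rw [mem_filter] at hf ⊢
      exact ⟨hf.1, hab.le.trans hf.2.1, hf.2.2⟩
    · intro hsub
      have ha : a ∈ (Scov 𝓗 (xev p) false).filter
          fun f => a.y ≤ f.y ∧ f.y ≤ p.1.y :=
        mem_filter.mpr ⟨haS, le_refl _, hay⟩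
      have := mem_filter.mp (hsub ha)
      exact absurd this.2.1 (not_le.mpr hab)
  have hhh : h = h' := by
    rcases lt_trichotomy h.y h'.y with hlt | heq | hlt
    · have := key h h' hS hy hlt
      omega
    · exact hd h (Scov_subset _ _ _ hS) h' (Scov_subset _ _ _ hS') heq
    · have := key h' h hS' hy' hlt
      omega
  rw [hwin, hwin', hhh]

lemma Q_exists {𝓗 : Finset HSeg} {k : ℕ}
    (hd : ∀ a ∈ 𝓗, ∀ b ∈ 𝓗, a.y = b.y → a = b) (hk : 1 ≤ k)
    {T : Finset HSeg} (hT𝓗 : T ⊆ 𝓗) (hcard : T.card = k)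
    (hL : ∃ L : VSeg, (𝓗.filter fun g => (g.toSet ∩ L.toSet).Nonempty) = T) :
    ∃ p : HSeg × Bool × ℕ, p.1 ∈ 𝓗 ∧ p.2.2 ≤ k ∧ Q 𝓗 k T p := by
  obtain ⟨L, hLT⟩ := hL
  have Tdef : T = 𝓗.filter fun g =>
      (g.x1 ≤ L.x ∧ L.x ≤ g.x2) ∧ (L.y1 ≤ g.y ∧ g.y ≤ L.y2) := by
    rw [← hLT]
    apply filter_congr
    intro g _
    exact inter_nonempty_iff g L
  have hTne : T.Nonempty := card_pos.mp (by omega)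
  obtain ⟨h, hhT, hmin⟩ := T.exists_min_image (fun f => f.y) hTne
  have hhprops := (mem_filter.mp (Tdef ▸ hhT)).2
  obtain ⟨e0, he0X, b0, hS0⟩ := discretize 𝓗 L.x ⟨h, hT𝓗 hhT, hhprops.1.1⟩
  -- witness property at arbitrary event point with the right covering set
  have hwitness : ∀ e b, Scov 𝓗 e b = (𝓗.filter fun g => g.x1 ≤ L.x ∧ L.x ≤ g.x2) →
      (h ∈ Scov 𝓗 e b ∧ T = win k (Aset 𝓗 e b h)) := by
    intro e b hS
    constructor
    · rw [hS, mem_filter]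
      exact ⟨hT𝓗 hhT, hhprops.1⟩
    · apply T_eq_win hcard hhT hmin
      rw [hS, filter_filter]
      exact Tdef
  have hP0 := hwitness e0 b0 hS0
  set Efin := (Xset 𝓗).filter (fun e' =>
      (h ∈ Scov 𝓗 e' false ∧ T = win k (Aset 𝓗 e' false h)) ∨
      (h ∈ Scov 𝓗 e' true ∧ T = win k (Aset 𝓗 e' true h))) with hEfin
  have hEne : Efin.Nonempty := by
    refine ⟨e0, mem_filter.mpr ⟨he0X, ?_⟩⟩
    cases b0
    · exact Or.inl hP0
    · exact Or.inr hP0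
  set es := Efin.min' hEne with hes
  have hesmem := mem_filter.mp (Efin.min'_mem hEne)
  have hesX : es ∈ Xset 𝓗 := hesmem.1
  have hesP := hesmem.2
  have hmin' : ∀ e', e' ∈ Xset 𝓗 →
      ((h ∈ Scov 𝓗 e' false ∧ T = win k (Aset 𝓗 e' false h)) ∨
       (h ∈ Scov 𝓗 e' true ∧ T = win k (Aset 𝓗 e' true h))) → es ≤ e' :=
    fun e' hX hP => Efin.min'_le e' (mem_filter.mpr ⟨hX, hP⟩)
  by_cases hPf : h ∈ Scov 𝓗 es false ∧ T = win k (Aset 𝓗 es false h)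
  · -- ADD case : the minimal witness is a closed event
    obtain ⟨hhS, hwin⟩ := hPf
    have hTA : T ⊆ Aset 𝓗 es false h := by
      rw [hwin]; exact win_subset _ _
    have hTsub : T ⊆ Scov 𝓗 es false := fun f hf => Aset_subset _ _ _ _ (hTA hf)
    have hgex : ∃ g ∈ T, g.x1 = es := by
      set E' := (Xset 𝓗).filter (fun q => q < es) with hE'
      by_cases hE'ne : E'.Nonempty
      · have hemmem := mem_filter.mp (E'.max'_mem hE'ne)
        set em := E'.max' hE'ne with hem
        have hemX : em ∈ Xset 𝓗 := hemmem.1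
        have hemlt : em < es := hemmem.2
        have hnotlt : ∀ q ∈ Xset 𝓗, q < es → q ≤ em :=
          fun q hq hlt => E'.le_max' q (mem_filter.mpr ⟨hq, hlt⟩)
        have hsubS : Scov 𝓗 em true ⊆ Scov 𝓗 es false := by
          intro g hg
          obtain ⟨hg𝓗, hx1, hx2⟩ := mem_Scov_true.mp hg
          refine mem_Scov_false.mpr ⟨hg𝓗, hx1.trans hemlt.le, ?_⟩
          by_contra hc
          push_neg at hc
          exact absurd (hnotlt g.x2 (mem_x2_Xset hg𝓗) hc) (not_le.mpr hx2)
        have hnew : ∀ g ∈ Scov 𝓗 es false, g ∉ Scov 𝓗 em true → g.x1 = es := by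
          intro g hgS hgn
          obtain ⟨hg𝓗, hx1, hx2⟩ := mem_Scov_false.mp hgS
          have hx2' : em < g.x2 := lt_of_lt_of_le hemlt hx2
          have hx1' : ¬ g.x1 ≤ em := fun c => hgn (mem_Scov_true.mpr ⟨hg𝓗, c, hx2'⟩)
          push_neg at hx1'
          by_contra hc
          have : g.x1 < es := lt_of_le_of_ne hx1 hc
          exact absurd (hnotlt g.x1 (mem_x1_Xset hg𝓗) this) (not_le.mpr hx1')
        by_cases hhS' : h ∈ Scov 𝓗 em true
        · have hnotP : T ≠ win k (Aset 𝓗 em true h) := by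
            intro c
            exact absurd (hmin' em hemX (Or.inr ⟨hhS', c⟩)) (not_le.mpr hemlt)
          have hAsub : Aset 𝓗 em true h ⊆ Aset 𝓗 es false h :=
            filter_subset_filter _ hsubS
          obtain ⟨g, hgT, hgA⟩ := core_add hAsub hwin hcard hnotP
          refine ⟨g, hgT, hnew g (hTsub hgT) ?_⟩
          intro c
          exact hgA (mem_filter.mpr ⟨c, hmin g hgT⟩)
        · exact ⟨h, hhT, hnew h hhS hhS'⟩
      · refine ⟨h, hhT, ?_⟩
        obtain ⟨hh𝓗, hx1, _⟩ := mem_Scov_false.mp hhS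
        by_contra hc
        exact hE'ne ⟨h.x1, mem_filter.mpr ⟨mem_x1_Xset hh𝓗, lt_of_le_of_ne hx1 hc⟩⟩
    obtain ⟨g, hgT, hgx1⟩ := hgex
    have hgwin : g ∈ win k (Aset 𝓗 es false h) := hwin ▸ hgT
    have hrle : rnk (Aset 𝓗 es false h) g ≤ k := (mem_filter.mp hgwin).2
    refine ⟨(g, false, rnk (Aset 𝓗 es false h) g),
      Scov_subset 𝓗 es false (hTsub hgT), hrle, ?_⟩
    have hxev : xev (g, false, rnk (Aset 𝓗 es false h) g) = es := by
      simp [xev, hgx1]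
    refine ⟨h, ?_, hmin g hgT, ?_, ?_⟩
    · rw [hxev]; exact hhS
    · rw [hxev]
      show rnk (Aset 𝓗 es false h) g = _
      rw [rnk, Aset, filter_filter]
    · rw [hxev]
      exact hwin
  · -- REMOVE case
    have hPt : h ∈ Scov 𝓗 es true ∧ T = win k (Aset 𝓗 es true h) :=
      hesP.resolve_left hPf
    obtain ⟨hhS, hwin⟩ := hPt
    have hSsub : Scov 𝓗 es true ⊆ Scov 𝓗 es false := by
      intro g hg
      obtain ⟨hg𝓗, hx1, hx2⟩ := mem_Scov_true.mp hg
      exact mem_Scov_false.mpr ⟨hg𝓗, hx1, hx2.le⟩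
    have hAsub : Aset 𝓗 es true h ⊆ Aset 𝓗 es false h := filter_subset_filter _ hSsub
    have hhSf : h ∈ Scov 𝓗 es false := hSsub hhS
    have hne : T ≠ win k (Aset 𝓗 es false h) := fun c => hPf ⟨hhSf, c⟩
    have hd' : ∀ a ∈ Aset 𝓗 es false h, ∀ b ∈ Aset 𝓗 es false h, a.y = b.y → a = b :=
      fun a ha b hb => hd a (Scov_subset _ _ _ (Aset_subset _ _ _ _ ha))
        b (Scov_subset _ _ _ (Aset_subset _ _ _ _ hb))
    obtain ⟨g, hgW, hgA⟩ := core_remove hd' hAsub hwin hcard hk hne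
    have hgAf : g ∈ Aset 𝓗 es false h := win_subset _ _ hgW
    obtain ⟨hgSf, hgy⟩ := mem_filter.mp hgAf
    obtain ⟨hg𝓗, hgx1, hgx2⟩ := mem_Scov_false.mp hgSf
    have hgx2e : g.x2 = es := by
      by_contra hc
      have hlt : es < g.x2 := lt_of_le_of_ne hgx2 (Ne.symm hc)
      exact hgA (mem_filter.mpr ⟨mem_Scov_true.mpr ⟨hg𝓗, hgx1, hlt⟩, hgy⟩)
    have hrle : rnk (Aset 𝓗 es false h) g ≤ k := (mem_filter.mp hgW).2
    refine ⟨(g, true, rnk (Aset 𝓗 es false h) g), hg𝓗, hrle, ?_⟩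
    have hxev : xev (g, true, rnk (Aset 𝓗 es false h) g) = es := by
      simp [xev, hgx2e]
    refine ⟨h, ?_, hgy, ?_, ?_⟩
    · rw [hxev]; exact hhSf
    · rw [hxev]
      show rnk (Aset 𝓗 es false h) g = _
      rw [rnk, Aset, filter_filter]
    · rw [hxev]
      exact hwin

theorem main_count (𝓗 : Finset HSeg) (k : ℕ) (hk : 1 ≤ k)
    (hd : ∀ a ∈ 𝓗, ∀ b ∈ 𝓗, a.y = b.y → a = b) :
    (𝓗.powerset.filter fun T => T.card = k ∧
      ∃ L : VSeg, (𝓗.filter fun g => (g.toSet ∩ L.toSet).Nonempty) = T).card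
      ≤ 𝓗.card * (2 * (k + 1)) := by
  set s := 𝓗.powerset.filter fun T => T.card = k ∧
      ∃ L : VSeg, (𝓗.filter fun g => (g.toSet ∩ L.toSet).Nonempty) = T with hs
  have key : ∀ T : Finset HSeg, ∃ p : HSeg × Bool × ℕ,
      T ∈ s → (p ∈ 𝓗 ×ˢ (Finset.univ : Finset Bool) ×ˢ Finset.range (k + 1) ∧
        Q 𝓗 k T p) := by
    intro T
    by_cases hT : T ∈ s
    · rw [hs, mem_filter, mem_powerset] at hT
      obtain ⟨hT𝓗, hcard, hL⟩ := hT
      obtain ⟨p, h1, h2, h3⟩ := Q_exists hd hk hT𝓗 hcard hL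
      refine ⟨p, fun _ => ⟨?_, h3⟩⟩
      rw [mem_product, mem_product, mem_range]
      exact ⟨h1, mem_univ _, by omega⟩
    · exact ⟨(⟨0, 1, 0, by norm_num⟩, false, 0), fun c => absurd c hT⟩
  choose f hf using key
  calc s.card ≤ (𝓗 ×ˢ (Finset.univ : Finset Bool) ×ˢ Finset.range (k + 1)).card := by
        apply card_le_card_of_injOn f
        · intro T hT
          exact (hf T hT).1
        · intro T hT T' hT' heq
          exact Q_inj hd (hf T (mem_coe.mp hT)).2
            (heq.symm ▸ (hf T' (mem_coe.mp hT')).2)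
    _ = 𝓗.card * (2 * (k + 1)) := by
        rw [card_product, card_product, card_range, card_univ, Fintype.card_bool]

end

end Stmt10

theorem stmt_10 :
    ∃ c : ℝ, 0 < c ∧ ∀ t : ℕ, 1 ≤ t → ∀ (𝓗 : Finset HSeg) (N : ℕ),
      𝓗.card = N →
      (∀ h ∈ 𝓗, ∀ h' ∈ 𝓗, h.y = h'.y → h = h') →
      (((𝓗.powerset.filter fun T => T.card = 2 * t - 1 ∧
        ∃ L : VSeg, (𝓗.filter fun h => (h.toSet ∩ L.toSet).Nonempty) = T)).card : ℝ)
        ≤ c * (t : ℝ) ^ 5 * N := by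
  refine ⟨4, by norm_num, ?_⟩
  intro t ht 𝓗 N hN hd
  have hk : 1 ≤ 2 * t - 1 := by omega
  have h1 := Stmt10.main_count 𝓗 (2 * t - 1) hk hd
  rw [hN] at h1
  have hfin : (𝓗.powerset.filter fun T => T.card = 2 * t - 1 ∧
      ∃ L : VSeg, (𝓗.filter fun h => (h.toSet ∩ L.toSet).Nonempty) = T).card
      ≤ 4 * t ^ 5 * N := by
    have h2 : 2 * (2 * t - 1 + 1) = 4 * t := by omega
    rw [h2] at h1
    have h3 : t ≤ t ^ 5 := Nat.le_self_pow (by norm_num) t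
    calc _ ≤ N * (4 * t) := h1
      _ = 4 * t * N := by ring
      _ ≤ 4 * t ^ 5 * N := Nat.mul_le_mul_right N (Nat.mul_le_mul_left 4 h3)
  calc ((𝓗.powerset.filter fun T => T.card = 2 * t - 1 ∧
      ∃ L : VSeg, (𝓗.filter fun h => (h.toSet ∩ L.toSet).Nonempty) = T).card : ℝ)
      ≤ ((4 * t ^ 5 * N : ℕ) : ℝ) := Nat.cast_le.mpr hfin
    _ = 4 * (t : ℝ) ^ 5 * N := by push_cast; ring
end

section
/- Let t ≥ 2 be an integer, and let A and B be finite families of axis-parallel rectangles in the plane such that A ∪ B is in general position. Suppose the bipartite intersection graph G_{A,B} is K_{t,t}-free. Let P be the set of all corner points of rectangles in A. Then the bipartite incidence graph with vertex sets P and B, having an edge (p, b) whenever p ∈ b, is K_{4t−3,4t−3}-free. -/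
open scoped Classical
open Finset

/-- An axis-parallel rectangle `[x₁,x₂] × [y₁,y₂]` with `x₁ < x₂` and `y₁ < y₂`. -/
structure Rect where
  x1 : ℝ
  x2 : ℝ
  y1 : ℝ
  y2 : ℝ
  hx : x1 < x2
  hy : y1 < y2

/-- The set of points of an axis-parallel rectangle. -/
def Rect.toSet (r : Rect) : Set (ℝ × ℝ) :=
  Set.Icc r.x1 r.x2 ×ˢ Set.Icc r.y1 r.y2

/-- The four corner points of an axis-parallel rectangle. -/
noncomputable def Rect.corners (r : Rect) : Finset (ℝ × ℝ) :=
  {(r.x1, r.y1), (r.x1, r.y2), (r.x2, r.y1), (r.x2, r.y2)}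

/-- A family of axis-parallel rectangles is in general position if the x-coordinates of all
vertical edges are pairwise distinct and the y-coordinates of all horizontal edges are
pairwise distinct. -/
def GenPos (F : Finset Rect) : Prop :=
  ∀ r ∈ F, ∀ s ∈ F, r ≠ s →
    ({r.x1, r.x2} ∩ {s.x1, s.x2} : Set ℝ) = ∅ ∧
    ({r.y1, r.y2} ∩ {s.y1, s.y2} : Set ℝ) = ∅

/-!
Each rectangle has at most four corners, so `4t - 3 = 4(t - 1) + 1` corner points of rectangles
of `A` are corners of at least `t` distinct rectangles of `A`. If all these points lie in every
rectangle of a set `T ⊆ B`, then each of those `t` rectangles shares a corner with every member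
of `T`, and `t` of them together with `t` members of `T` form a `K_{t,t}` in `G_{A,B}`.
-/

theorem Rect.mem_toSet_of_mem_corners {r : Rect} {p : ℝ × ℝ} (hp : p ∈ r.corners) :
    p ∈ r.toSet := by
  simp only [Rect.corners, mem_insert, mem_singleton] at hp
  rcases hp with rfl | rfl | rfl | rfl <;>
    simp [Rect.toSet, r.hx.le, r.hy.le]

theorem Rect.card_corners_le (r : Rect) : #r.corners ≤ 4 := card_le_four

theorem Finset.exists_subset_card_mul_ge_of_subset_biUnion {ι β : Type*} [DecidableEq β]
    {A : Finset ι} {f : ι → Finset β} {S : Finset β} {k : ℕ} (hS : S ⊆ A.biUnion f)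
    (hk : ∀ a ∈ A, #(f a) ≤ k) :
    ∃ U ⊆ A, #S ≤ #U * k ∧ ∀ a ∈ U, ∃ p ∈ S, p ∈ f a := by
  refine ⟨A.filter fun a => ∃ p ∈ S, p ∈ f a, filter_subset _ _, ?_,
    fun a ha => (mem_filter.1 ha).2⟩
  have hS' : S ⊆ (A.filter fun a => ∃ p ∈ S, p ∈ f a).biUnion f := by
    intro p hp
    obtain ⟨a, ha, hpa⟩ := mem_biUnion.1 (hS hp)
    exact mem_biUnion.2 ⟨a, mem_filter.2 ⟨ha, p, hp, hpa⟩, hpa⟩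
  exact (card_le_card hS').trans
    (card_biUnion_le_card_mul _ _ _ fun a ha => hk a (mem_filter.1 ha).1)

theorem stmt_11_general (t : ℕ) (A B : Finset Rect)
    (hfree : ¬ ∃ (S T : Finset Rect), S ⊆ A ∧ T ⊆ B ∧ S.card = t ∧ T.card = t ∧
      ∀ a ∈ S, ∀ b ∈ T, (a.toSet ∩ b.toSet).Nonempty) :
    ¬ ∃ (S : Finset (ℝ × ℝ)) (T : Finset Rect),
      S ⊆ A.biUnion Rect.corners ∧ T ⊆ B ∧
      S.card = 4 * t - 3 ∧ T.card = 4 * t - 3 ∧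
      ∀ p ∈ S, ∀ b ∈ T, p ∈ b.toSet := by
  rintro ⟨S, T, hSA, hTB, hScard, hTcard, hmem⟩
  obtain ⟨U, hUA, hUcard, hUS⟩ :=
    exists_subset_card_mul_ge_of_subset_biUnion hSA fun a _ => a.card_corners_le
  obtain ⟨U', hU'U, hU'⟩ := exists_subset_card_eq (show t ≤ #U by omega)
  obtain ⟨T', hT'T, hT'⟩ := exists_subset_card_eq (show t ≤ #T by omega)
  refine hfree ⟨U', T', hU'U.trans hUA, hT'T.trans hTB, hU', hT', fun a ha b hb => ?_⟩
  obtain ⟨p, hpS, hpa⟩ := hUS a (hU'U ha)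
  exact ⟨p, Rect.mem_toSet_of_mem_corners hpa, hmem p hpS b (hT'T hb)⟩

theorem stmt_11 (t : ℕ) (ht : 2 ≤ t) (A B : Finset Rect)
    (hgp : GenPos (A ∪ B))
    (hfree : ¬ ∃ (S T : Finset Rect), S ⊆ A ∧ T ⊆ B ∧ S.card = t ∧ T.card = t ∧
      ∀ a ∈ S, ∀ b ∈ T, (a.toSet ∩ b.toSet).Nonempty) :
    ¬ ∃ (S : Finset (ℝ × ℝ)) (T : Finset Rect),
      S ⊆ A.biUnion Rect.corners ∧ T ⊆ B ∧
      S.card = 4 * t - 3 ∧ T.card = 4 * t - 3 ∧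
      ∀ p ∈ S, ∀ b ∈ T, p ∈ b.toSet :=
  stmt_11_general t A B hfree
end

section
/- Let t ≥ 2 be an integer, and let A and B be finite families of axis-parallel rectangles in the plane such that A ∪ B is in general position. Suppose the bipartite intersection graph G_{A,B} is K_{t,t}-free. Let h₁, …, h_{2t−1} be 2t−1 distinct horizontal edges of rectangles in A. Then the number of vertical edges of rectangles in B that intersect all of h₁, …, h_{2t−1} is at most 2t−2. -/
open scoped Classical
open Finset

/-- The bottom horizontal edge of a rectangle. -/
def Rect.bottom (r : Rect) : HSeg := ⟨r.x1, r.x2, r.y1, r.hx.le⟩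

/-- The top horizontal edge of a rectangle. -/
def Rect.top (r : Rect) : HSeg := ⟨r.x1, r.x2, r.y2, r.hx.le⟩

/-- The left vertical edge of a rectangle. -/
def Rect.left (r : Rect) : VSeg := ⟨r.x1, r.y1, r.y2, r.hy.le⟩

/-- The right vertical edge of a rectangle. -/
def Rect.right (r : Rect) : VSeg := ⟨r.x2, r.y1, r.y2, r.hy.le⟩

private lemma bottom_sub (r : Rect) : r.bottom.toSet ⊆ r.toSet := by
  rintro ⟨x, y⟩ ⟨hx, hy⟩
  simp only [Set.mem_singleton_iff] at hy
  exact ⟨hx, by simp [Rect.bottom] at hy; rw [hy]; exact ⟨le_refl _, r.hy.le⟩⟩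

private lemma top_sub (r : Rect) : r.top.toSet ⊆ r.toSet := by
  rintro ⟨x, y⟩ ⟨hx, hy⟩
  simp only [Set.mem_singleton_iff] at hy
  exact ⟨hx, by simp [Rect.top] at hy; rw [hy]; exact ⟨r.hy.le, le_refl _⟩⟩

private lemma left_sub (r : Rect) : r.left.toSet ⊆ r.toSet := by
  rintro ⟨x, y⟩ ⟨hx, hy⟩
  simp only [Set.mem_singleton_iff] at hx
  exact ⟨by simp [Rect.left] at hx; rw [hx]; exact ⟨le_refl _, r.hx.le⟩, hy⟩

private lemma right_sub (r : Rect) : r.right.toSet ⊆ r.toSet := by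
  rintro ⟨x, y⟩ ⟨hx, hy⟩
  simp only [Set.mem_singleton_iff] at hx
  exact ⟨by simp [Rect.right] at hx; rw [hx]; exact ⟨r.hx.le, le_refl _⟩, hy⟩

theorem stmt_12' (t : ℕ) (ht : 2 ≤ t) (A B : Finset Rect)
    (hgp : GenPos (A ∪ B))
    (hfree : ¬ ∃ (S T : Finset Rect), S ⊆ A ∧ T ⊆ B ∧ S.card = t ∧ T.card = t ∧
      ∀ a ∈ S, ∀ b ∈ T, (a.toSet ∩ b.toSet).Nonempty)
    (H : Finset HSeg) (hHcard : H.card = 2 * t - 1)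
    (hHedge : ∀ h ∈ H, ∃ r ∈ A, h = r.bottom ∨ h = r.top) :
    ((B.biUnion fun r => ({r.left, r.right} : Finset VSeg)).filter
      fun v => ∀ h ∈ H, (v.toSet ∩ h.toSet).Nonempty).card ≤ 2 * t - 2 := by
  by_contra hcon
  push_neg at hcon
  set V := (B.biUnion fun r => ({r.left, r.right} : Finset VSeg)).filter
      (fun v => ∀ h ∈ H, (v.toSet ∩ h.toSet).Nonempty) with hV
  have hVcard : 2 * t - 1 ≤ V.card := by omega
  apply hfree
  have junk : Rect := ⟨0, 1, 0, 1, by norm_num, by norm_num⟩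
  set fA : HSeg → Rect := fun h =>
    if hh : ∃ r ∈ A, h = r.bottom ∨ h = r.top then hh.choose else junk with hfA
  have fA_spec : ∀ h ∈ H, fA h ∈ A ∧ (h = (fA h).bottom ∨ h = (fA h).top) := by
    intro h hh
    have hex := hHedge h hh
    simp only [hfA, dif_pos hex]
    exact ⟨hex.choose_spec.1, hex.choose_spec.2⟩
  set fB : VSeg → Rect := fun v =>
    if hv : ∃ r ∈ B, v = r.left ∨ v = r.right then hv.choose else junk with hfB
  have fB_spec : ∀ v ∈ V, fB v ∈ B ∧ (v = (fB v).left ∨ v = (fB v).right) := by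
    intro v hv
    rw [hV, mem_filter, mem_biUnion] at hv
    obtain ⟨⟨r, hr, hvr⟩, _⟩ := hv
    have hex : ∃ r ∈ B, v = r.left ∨ v = r.right := ⟨r, hr, by simpa using hvr⟩
    simp only [hfB, dif_pos hex]
    exact ⟨hex.choose_spec.1, hex.choose_spec.2⟩
  -- image cardinalities
  have hHim : H.card ≤ 2 * (H.image fA).card := by
    apply Finset.card_le_mul_card_image
    intro a _
    calc (H.filter fun h => fA h = a).card
        ≤ ({a.bottom, a.top} : Finset HSeg).card := by
          apply Finset.card_le_card
          intro h hh
          rw [mem_filter] at hh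
          have := (fA_spec h hh.1).2
          rw [hh.2] at this
          simpa using this
      _ ≤ 2 := Finset.card_insert_le _ _ |>.trans (by simp)
  have hVim : V.card ≤ 2 * (V.image fB).card := by
    apply Finset.card_le_mul_card_image
    intro b _
    calc (V.filter fun v => fB v = b).card
        ≤ ({b.left, b.right} : Finset VSeg).card := by
          apply Finset.card_le_card
          intro v hv
          rw [mem_filter] at hv
          have := (fB_spec v hv.1).2
          rw [hv.2] at this
          simpa using this
      _ ≤ 2 := Finset.card_insert_le _ _ |>.trans (by simp)
  have hSA : t ≤ (H.image fA).card := by omega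
  have hTB : t ≤ (V.image fB).card := by omega
  obtain ⟨S, hSsub, hScard⟩ := Finset.exists_subset_card_eq hSA
  obtain ⟨T, hTsub, hTcard⟩ := Finset.exists_subset_card_eq hTB
  refine ⟨S, T, ?_, ?_, hScard, hTcard, ?_⟩
  · intro a ha
    obtain ⟨h, hh, rfl⟩ := Finset.mem_image.mp (hSsub ha)
    exact (fA_spec h hh).1
  · intro b hb
    obtain ⟨v, hv, rfl⟩ := Finset.mem_image.mp (hTsub hb)
    exact (fB_spec v hv).1
  · intro a ha b hb
    obtain ⟨h, hh, rfl⟩ := Finset.mem_image.mp (hSsub ha)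
    obtain ⟨v, hv, rfl⟩ := Finset.mem_image.mp (hTsub hb)
    have hvprop : ∀ h' ∈ H, (v.toSet ∩ h'.toSet).Nonempty :=
      (Finset.mem_filter.mp hv).2
    obtain ⟨p, hpv, hph⟩ := hvprop h hh
    refine ⟨p, ?_, ?_⟩
    · rcases (fA_spec h hh).2 with he | he
      · exact bottom_sub _ (he ▸ hph)
      · exact top_sub _ (he ▸ hph)
    · rcases (fB_spec v hv).2 with he | he
      · exact left_sub _ (he ▸ hpv)
      · exact right_sub _ (he ▸ hpv)


theorem stmt_12 (t : ℕ) (ht : 2 ≤ t) (A B : Finset Rect)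
    (hgp : GenPos (A ∪ B))
    (hfree : ¬ ∃ (S T : Finset Rect), S ⊆ A ∧ T ⊆ B ∧ S.card = t ∧ T.card = t ∧
      ∀ a ∈ S, ∀ b ∈ T, (a.toSet ∩ b.toSet).Nonempty)
    (H : Finset HSeg) (hHcard : H.card = 2 * t - 1)
    (hHedge : ∀ h ∈ H, ∃ r ∈ A, h = r.bottom ∨ h = r.top) :
    ((B.biUnion fun r => ({r.left, r.right} : Finset VSeg)).filter
      fun v => ∀ h ∈ H, (v.toSet ∩ h.toSet).Nonempty).card ≤ 2 * t - 2 := by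
  exact stmt_12' t ht A B hgp hfree H hHcard hHedge
end

section
/- Let t ≥ 1 be an integer, let 𝓗 be a finite family of horizontal segments in the plane whose y-coordinates are pairwise distinct, and let v be a vertical segment that intersects exactly d members of 𝓗, where d ≥ 2t−1. Then there exist at least d − 2t + 2 distinct subsets T ⊆ 𝓗 with |T| = 2t−1 such that some vertical segment L satisfies {h ∈ 𝓗 : h ∩ L ≠ ∅} = T. -/
open scoped Classical
open Finset

lemma inter_nonempty_iff (h : HSeg) (L : VSeg) :
    (h.toSet ∩ L.toSet).Nonempty ↔
      h.x1 ≤ L.x ∧ L.x ≤ h.x2 ∧ L.y1 ≤ h.y ∧ h.y ≤ L.y2 := by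
  constructor
  · rintro ⟨⟨px, py⟩, ⟨⟨hx1, hy1⟩, ⟨hx2, hy2⟩⟩⟩
    simp only [HSeg.toSet, VSeg.toSet, Set.mem_Icc, Set.mem_singleton_iff] at *
    subst hy1; subst hx2
    exact ⟨hx1.1, hx1.2, hy2.1, hy2.2⟩
  · rintro ⟨h1, h2, h3, h4⟩
    exact ⟨(L.x, h.y), ⟨⟨h1, h2⟩, rfl⟩, ⟨rfl, h3, h4⟩⟩

theorem stmt_13 (t : ℕ) (ht : 1 ≤ t) (𝓗 : Finset HSeg)
    (hy : ∀ h ∈ 𝓗, ∀ h' ∈ 𝓗, h.y = h'.y → h = h')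
    (v : VSeg) (d : ℕ)
    (hd : (𝓗.filter fun h => (h.toSet ∩ v.toSet).Nonempty).card = d)
    (hdt : 2 * t - 1 ≤ d) :
    d + 2 - 2 * t ≤ (𝓗.powerset.filter fun T => T.card = 2 * t - 1 ∧
      ∃ L : VSeg, (𝓗.filter fun h => (h.toSet ∩ L.toSet).Nonempty) = T).card := by
  classical
  set S := 𝓗.filter (fun h => (h.toSet ∩ v.toSet).Nonempty) with hSdef
  have hS𝓗 : S ⊆ 𝓗 := filter_subset _ _
  have hinjS : Set.InjOn HSeg.y S := by
    intro a ha b hb hab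
    exact hy a (hS𝓗 ha) b (hS𝓗 hb) hab
  have hycard : (S.image HSeg.y).card = d := by
    rw [card_image_of_injOn hinjS, hd]
  set Y := S.image HSeg.y with hYdef
  have hdpos : 0 < d := by omega
  let f := Y.orderIsoOfFin hycard
  let g : ℕ → ℝ := fun i => (f ⟨min i (d - 1), by omega⟩ : ℝ)
  have hgmono : ∀ i j, i ≤ j → j ≤ d - 1 → g i ≤ g j := by
    intro i j hij hjd
    exact f.monotone (by simp [Fin.le_def]; omega)
  have hgstrict : ∀ i j, i < j → j ≤ d - 1 → g i < g j := by
    intro i j hij hjd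
    exact f.strictMono (by simp [Fin.lt_def]; omega)
  have hgY : ∀ i, g i ∈ Y := fun i => (f _).2
  -- every y-value in Y lies in [v.y1, v.y2]
  have hYv : ∀ z ∈ Y, v.y1 ≤ z ∧ z ≤ v.y2 := by
    intro z hz
    obtain ⟨h, hhS, rfl⟩ := mem_image.mp hz
    have := (mem_filter.mp hhS).2
    rw [inter_nonempty_iff] at this
    exact ⟨this.2.2.1, this.2.2.2⟩
  set n := d + 2 - 2 * t with hn
  -- the window sets
  let T : ℕ → Finset HSeg := fun i =>
    S.filter (fun h => g i ≤ h.y ∧ h.y ≤ g (i + 2 * t - 2))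
  have hwin : ∀ i, i ∈ Finset.range n → i + 2 * t - 2 ≤ d - 1 := by
    intro i hi
    rw [mem_range] at hi
    omega
  -- a member of S with y-value g i belongs to T i
  have hmemTi : ∀ i ∈ Finset.range n, ∀ h ∈ S, h.y = g i → h ∈ T i := by
    intro i hi h hhS hhy
    refine mem_filter.mpr ⟨hhS, le_of_eq hhy.symm, ?_⟩
    rw [hhy]
    exact hgmono i (i + 2 * t - 2) (by omega) (hwin i hi)
  -- cardinality of each window
  have hcardT : ∀ i ∈ Finset.range n, (T i).card = 2 * t - 1 := by
    intro i hi
    have hi' : i < d + 2 - 2 * t := mem_range.mp hi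
    have h1 : (T i).card = ((T i).image HSeg.y).card :=
      (card_image_of_injOn (hinjS.mono (filter_subset _ _))).symm
    have h2 : (T i).image HSeg.y =
        Y.filter (fun z => g i ≤ z ∧ z ≤ g (i + 2 * t - 2)) := by
      rw [hYdef, filter_image]
    rw [h1, h2]
    -- count via the order iso
    have h3 : (Y.filter (fun z => g i ≤ z ∧ z ≤ g (i + 2 * t - 2))).card =
        (Finset.Icc (⟨i, by omega⟩ : Fin d) ⟨i + 2 * t - 2, by omega⟩).card := by
      refine (Finset.card_bij (fun j _ => (f j : ℝ)) ?_ ?_ ?_).symm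
      · intro j hj
        rw [mem_Icc] at hj
        refine mem_filter.mpr ⟨(f j).2, ?_, ?_⟩
        · exact f.monotone (by simpa [Fin.le_def, Nat.min_eq_left (by omega : i ≤ d-1)]
            using hj.1)
        · exact f.monotone (by
            simp only [Fin.le_def]
            have := hj.2
            rw [Fin.le_def] at this
            simp only [Nat.min_eq_left (hwin i hi)]
            exact this)
      · intro a _ b _ hab
        exact f.injective (Subtype.ext hab)
      · intro z hz
        obtain ⟨hzY, hz1, hz2⟩ := mem_filter.mp hz
        obtain ⟨j, hj⟩ := f.surjective ⟨z, hzY⟩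
        refine ⟨j, mem_Icc.mpr ⟨?_, ?_⟩, by simpa using congrArg Subtype.val hj⟩
        · rw [← f.le_iff_le]
          show (f _ : ℝ) ≤ (f j : ℝ)
          rw [hj]
          simpa [g, Nat.min_eq_left (by omega : i ≤ d-1)] using hz1
        · rw [← f.le_iff_le]
          show (f j : ℝ) ≤ (f _ : ℝ)
          rw [hj]
          simpa [g, Nat.min_eq_left (hwin i hi)] using hz2
    rw [h3, Fin.card_Icc]
    simp only []
    omega
  -- each window is realizable
  have hreal : ∀ i ∈ Finset.range n, T i ∈ 𝓗.powerset.filter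
      (fun T' => T'.card = 2 * t - 1 ∧
        ∃ L : VSeg, (𝓗.filter fun h => (h.toSet ∩ L.toSet).Nonempty) = T') := by
    intro i hi
    refine mem_filter.mpr ⟨mem_powerset.mpr ((filter_subset _ _).trans hS𝓗), hcardT i hi, ?_⟩
    have hgle : g i ≤ g (i + 2 * t - 2) := hgmono i _ (by omega) (hwin i hi)
    refine ⟨⟨v.x, g i, g (i + 2 * t - 2), hgle⟩, ?_⟩
    ext h
    simp only [mem_filter, T, inter_nonempty_iff, hSdef]
    constructor
    · rintro ⟨hh𝓗, hx1, hx2, hy1, hy2⟩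
      have hv1 := (hYv _ (hgY i)).1
      have hv2 := (hYv _ (hgY (i + 2 * t - 2))).2
      exact ⟨⟨hh𝓗, hx1, hx2, le_trans hv1 hy1, le_trans hy2 hv2⟩, hy1, hy2⟩
    · rintro ⟨⟨hh𝓗, hx1, hx2, _, _⟩, hy1, hy2⟩
      exact ⟨hh𝓗, hx1, hx2, hy1, hy2⟩
  -- injectivity and conclusion
  have key : ∀ i j, i ∈ Finset.range n → j ∈ Finset.range n → i < j → T i ≠ T j := by
    intro i j hi hj hlt hij
    obtain ⟨h, hhS, hhy⟩ := mem_image.mp (hgY i)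
    have h1 : h ∈ T i := hmemTi i hi h hhS hhy
    rw [hij] at h1
    have h2 := (mem_filter.mp h1).2.1
    rw [hhy] at h2
    have hjd := hwin j hj
    exact absurd h2 (not_le.mpr (hgstrict i j hlt (by omega)))
  have hinj : Set.InjOn T (Finset.range n) := by
    intro i hi j hj hij
    rw [Finset.mem_coe] at hi hj
    rcases lt_trichotomy i j with hlt | heq | hlt
    · exact absurd hij (key i j hi hj hlt)
    · exact heq
    · exact absurd hij.symm (key j i hj hi hlt)
  calc d + 2 - 2 * t = (Finset.range n).card := by rw [card_range]
    _ ≤ _ := Finset.card_le_card_of_injOn T hreal hinj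
end

section
/- There exists an absolute constant c > 0 such that the following holds for every integer t ≥ 2. Let A be a family of n axis-parallel frames and B a family of m axis-parallel frames in the plane, such that the underlying rectangles of A ∪ B are in general position. If the bipartite intersection graph G_{A,B} is K_{t,t}-free, then |E(G_{A,B})| ≤ c·( t⁶·n + t·m ). -/
/-!
In general position two distinct frames meet only where a vertical side of one properly crosses a
horizontal side of the other. Choosing which of the two rectangles gives the vertical side and
which sides are involved splits the edges into eight families of crossings between segments `V`
coming from `A`, with pairwise distinct positions, and segments `H` coming from `B` (plus the
pairs `(r, r)`, at most `|B|` of them).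

For such a crossing graph without `K_{t,t}`, a segment `h ∈ H` crossed at most `2t` times pays
for its own crossings. Otherwise every crossing `(v, h)` has `t` crossers of `h` on one side of `v`,
say the right; then the window of `v` at the height of `h`, the `t` segments of `V` nearest to
`v` on its right at that height, crosses `h`, so fewer than `t` such `h` share a window. Sweeping
the height along `v`, the window changes only where one of its members starts or ends, and a
segment is in the window of at most `t` segments at any given height, so the windows met along
all `v ∈ V` number `O(t |V|)`. This gives `O(t |H| + t² |V|)` crossings.
-/

open scoped Classical
open Finset

/-- The frame (boundary) of an axis-parallel rectangle: the union of its two horizontal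
edges and its two vertical edges. -/
def Rect.frame (r : Rect) : Set (ℝ × ℝ) :=
  (Set.Icc r.x1 r.x2 ×ˢ ({r.y1, r.y2} : Set ℝ)) ∪
    (({r.x1, r.x2} : Set ℝ) ×ˢ Set.Icc r.y1 r.y2)

section Combinatorics
variable {α β : Type*}

def BicliqueFree (t : ℕ) (r : α → β → Prop) (S : Finset α) (T : Finset β) : Prop :=
  ∀ S' ⊆ S, ∀ T' ⊆ T, t ≤ #S' → t ≤ #T' → ∃ a ∈ S', ∃ b ∈ T', ¬ r a b

theorem BicliqueFree.mono {t : ℕ} {r r' : α → β → Prop} {S : Finset α} {T : Finset β}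
    (h : BicliqueFree t r S T) (hr : ∀ a ∈ S, ∀ b ∈ T, r' a b → r a b) :
    BicliqueFree t r' S T := by
  intro S' hS' T' hT' hs ht
  obtain ⟨a, ha, b, hb, hab⟩ := h S' hS' T' hT' hs ht
  exact ⟨a, ha, b, hb, fun h' => hab (hr a (hS' ha) b (hT' hb) h')⟩

theorem bicliqueFree_of_not_exists {t : ℕ} {r : α → β → Prop} {S : Finset α} {T : Finset β}
    (h : ¬ ∃ S' T', S' ⊆ S ∧ T' ⊆ T ∧ #S' = t ∧ #T' = t ∧ ∀ a ∈ S', ∀ b ∈ T', r a b) :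
    BicliqueFree t r S T := by
  intro S' hS' T' hT' hs ht
  by_contra! hall
  obtain ⟨S'', hS'', hs''⟩ := exists_subset_card_eq hs
  obtain ⟨T'', hT'', ht''⟩ := exists_subset_card_eq ht
  exact h ⟨S'', T'', hS''.trans hS', hT''.trans hT', hs'', ht'',
    fun a ha b hb => hall a (hS'' ha) b (hT'' hb)⟩

theorem card_filter_product_eq_sum_left (S : Finset α) (T : Finset β) (r : α → β → Prop)
    [∀ a b, Decidable (r a b)] :
    #{p ∈ S ×ˢ T | r p.1 p.2} = ∑ a ∈ S, #{b ∈ T | r a b} := by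
  simp only [card_filter, sum_product]

theorem sum_card_filter_comm (S : Finset α) (T : Finset β) (r : α → β → Prop)
    [∀ a b, Decidable (r a b)] :
    ∑ a ∈ S, #{b ∈ T | r a b} = ∑ b ∈ T, #{a ∈ S | r a b} :=
  sum_card_bipartiteAbove_eq_sum_card_bipartiteBelow r

theorem card_filter_product_eq_sum_right (S : Finset α) (T : Finset β) (r : α → β → Prop)
    [∀ a b, Decidable (r a b)] :
    #{p ∈ S ×ˢ T | r p.1 p.2} = ∑ b ∈ T, #{a ∈ S | r a b} :=
  (card_filter_product_eq_sum_left S T r).trans (sum_card_filter_comm S T r)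

end Combinatorics

section Lowest
variable {ι α : Type*} [LinearOrder α] (S S' : Finset ι) (key : ι → α) (t : ℕ)

def keyRank (w : ι) : ℕ := #{w' ∈ S | key w' < key w}

/-- The `t` elements of smallest key when `key` is injective on `S`. -/
def lowest : Finset ι := {w ∈ S | keyRank S key w < t}

variable {S S' key t}

theorem lowest_subset : lowest S key t ⊆ S := filter_subset _ _

theorem le_card_lowest (h : t ≤ #S) : t ≤ #(lowest S key t) := by
  by_contra! hlt
  obtain ⟨w, hw, hmin⟩ : ∃ w ∈ S \ lowest S key t, ∀ w' ∈ S \ lowest S key t, key w ≤ key w' :=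
    exists_min_image _ key <| sdiff_nonempty.2 fun hsub =>
      (card_le_card hsub).not_gt (hlt.trans_le h)
  obtain ⟨hwS, hwlow⟩ := mem_sdiff.1 hw
  have hbelow : {w' ∈ S | key w' < key w} ⊆ lowest S key t := fun w' hw' => by
    obtain ⟨hw'S, hlt'⟩ := mem_filter.1 hw'
    by_contra hw'low
    exact (hmin w' (mem_sdiff.2 ⟨hw'S, hw'low⟩)).not_gt hlt'
  exact hwlow (mem_filter.2 ⟨hwS, (card_le_card hbelow).trans_lt hlt⟩)

theorem key_lt_of_mem_lowest {c : α} (h : t ≤ #{w ∈ S | key w < c}) {w : ι}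
    (hw : w ∈ lowest S key t) : key w < c := by
  by_contra! hcw
  have hsub : {w' ∈ S | key w' < c} ⊆ {w' ∈ S | key w' < key w} :=
    monotone_filter_right _ fun _ _ h => h.trans_le hcw
  exact (mem_filter.1 hw).2.not_ge (h.trans (card_le_card hsub))

theorem key_lt_of_mem_lowest_of_notMem {w y : ι} (hw : w ∈ S) (hw' : w ∉ lowest S key t)
    (hy : y ∈ lowest S key t) : key y < key w := by
  by_contra! hwy
  have hsub : {w' ∈ S | key w' < key w} ⊆ {w' ∈ S | key w' < key y} :=
    monotone_filter_right _ fun _ _ h => h.trans_le hwy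
  exact hw' (mem_filter.2 ⟨hw, (card_le_card hsub).trans_lt (mem_filter.1 hy).2⟩)

theorem lowest_subset_lowest (h : lowest S key t ⊆ S') (h' : lowest S' key t ⊆ S) :
    lowest S key t ⊆ lowest S' key t := by
  intro w hw
  by_contra hw'
  have hwS' := h hw
  have hS' : t ≤ #S' := by
    by_contra! hlt
    exact hw' (mem_filter.2 ⟨hwS', (card_le_card (filter_subset _ _)).trans_lt hlt⟩)
  have hsub : lowest S' key t ⊆ {w' ∈ S | key w' < key w} := fun y hy =>
    mem_filter.2 ⟨h' hy, key_lt_of_mem_lowest_of_notMem hwS' hw' hy⟩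
  exact (mem_filter.1 hw).2.not_ge ((le_card_lowest hS').trans (card_le_card hsub))

theorem lowest_eq_of_subset (h : lowest S key t ⊆ S') (h' : lowest S' key t ⊆ S) :
    lowest S key t = lowest S' key t :=
  (lowest_subset_lowest h h').antisymm (lowest_subset_lowest h' h)

end Lowest

section ChangePairs
variable {α β : Type*} [LinearOrder α] [DecidableEq β] {Z : Finset α} {g : α → β}
  {p q : α × α} {e : α}

noncomputable def changePairs (Z : Finset α) (g : α → β) : Finset (α × α) :=
  {p ∈ Z ×ˢ Z | p.1 < p.2 ∧ (∀ z ∈ Z, z ∉ Set.Ioo p.1 p.2) ∧ g p.1 ≠ g p.2}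

theorem mem_changePairs :
    p ∈ changePairs Z g ↔
      p.1 ∈ Z ∧ p.2 ∈ Z ∧ p.1 < p.2 ∧ (∀ z ∈ Z, z ∉ Set.Ioo p.1 p.2) ∧ g p.1 ≠ g p.2 := by
  simp only [changePairs, mem_filter, mem_product, and_assoc]

theorem changePairs_mono {M : α} (hM : ∀ z ∈ Z, z < M) :
    changePairs Z g ⊆ changePairs (insert M Z) g := by
  intro p hp
  obtain ⟨h1, h2, hlt, hgap, hne⟩ := mem_changePairs.1 hp
  refine mem_changePairs.2 ⟨mem_insert_of_mem h1, mem_insert_of_mem h2, hlt, fun z hz => ?_, hne⟩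
  rcases mem_insert.1 hz with rfl | hz
  · exact fun hzp => (hM _ h2).not_gt hzp.2
  · exact hgap z hz

theorem card_image_le_one_add_card_changePairs (Z : Finset α) (g : α → β) :
    #(Z.image g) ≤ 1 + #(changePairs Z g) := by
  induction Z using Finset.induction_on_max with
  | empty => simp
  | insert M Z hM ih =>
    rcases Z.eq_empty_or_nonempty with rfl | hZ
    · simp
    by_cases hgM : g M ∈ Z.image g
    · rw [image_insert, insert_eq_of_mem hgM]
      exact ih.trans (by grw [changePairs_mono hM])
    have hnew : (Z.max' hZ, M) ∈ changePairs (insert M Z) g := by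
      refine mem_changePairs.2 ⟨mem_insert_of_mem (Z.max'_mem hZ), mem_insert_self M Z,
        hM _ (Z.max'_mem hZ), fun z hz hzI => ?_,
        fun h => hgM (h ▸ mem_image_of_mem g (Z.max'_mem hZ))⟩
      rcases mem_insert.1 hz with rfl | hz
      · exact hzI.2.false
      · exact (Z.le_max' z hz).not_gt hzI.1
    have hold : (Z.max' hZ, M) ∉ changePairs Z g := fun h =>
      (hM M (mem_changePairs.1 h).2.1).false
    calc #((insert M Z).image g) ≤ #(Z.image g) + 1 := by
          rw [image_insert]; exact card_insert_le _ _
      _ ≤ 1 + #(changePairs Z g) + 1 := by omega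
      _ = 1 + #(insert (Z.max' hZ, M) (changePairs Z g)) := by rw [card_insert_of_notMem hold]; ring
      _ ≤ 1 + #(changePairs (insert M Z) g) := by
          grw [insert_subset hnew (changePairs_mono hM)]

theorem eq_of_mem_changePairs_of_mem_Ico (hp : p ∈ changePairs Z g) (hq : q ∈ changePairs Z g)
    (hep : e ∈ Set.Ico p.1 p.2) (heq : e ∈ Set.Ico q.1 q.2) : p = q := by
  obtain ⟨hp1, hp2, -, hpgap, -⟩ := mem_changePairs.1 hp
  obtain ⟨hq1, hq2, -, hqgap, -⟩ := mem_changePairs.1 hq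
  refine Prod.ext (le_antisymm ?_ ?_) (le_antisymm ?_ ?_) <;> refine not_lt.1 fun h => ?_
  · exact hqgap _ hp1 ⟨h, hep.1.trans_lt heq.2⟩
  · exact hpgap _ hq1 ⟨h, heq.1.trans_lt hep.2⟩
  · exact hpgap _ hq2 ⟨hep.1.trans_lt heq.2, h⟩
  · exact hqgap _ hp2 ⟨heq.1.trans_lt hep.2, h⟩

theorem eq_of_mem_changePairs_of_mem_Ioc (hp : p ∈ changePairs Z g) (hq : q ∈ changePairs Z g)
    (hep : e ∈ Set.Ioc p.1 p.2) (heq : e ∈ Set.Ioc q.1 q.2) : p = q := by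
  obtain ⟨hp1, hp2, -, hpgap, -⟩ := mem_changePairs.1 hp
  obtain ⟨hq1, hq2, -, hqgap, -⟩ := mem_changePairs.1 hq
  refine Prod.ext (le_antisymm ?_ ?_) (le_antisymm ?_ ?_) <;> refine not_lt.1 fun h => ?_
  · exact hqgap _ hp1 ⟨h, hep.1.trans_le heq.2⟩
  · exact hpgap _ hq1 ⟨h, heq.1.trans_le hep.2⟩
  · exact hpgap _ hq2 ⟨hep.1.trans_le heq.2, h⟩
  · exact hqgap _ hp2 ⟨heq.1.trans_le hep.2, h⟩

end ChangePairs

/-- A segment at coordinate `pos` spanning the open interval `(lo, hi)` in the other coordinate;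
the same type describes vertical and horizontal segments. -/
structure Seg where
  pos : ℝ
  lo : ℝ
  hi : ℝ

namespace Seg

def Crosses (v h : Seg) : Prop := v.pos ∈ Set.Ioo h.lo h.hi ∧ h.pos ∈ Set.Ioo v.lo v.hi

theorem crosses_comm {v h : Seg} : v.Crosses h ↔ h.Crosses v := And.comm

def negPos (s : Seg) : Seg := ⟨-s.pos, s.lo, s.hi⟩

def negSpan (s : Seg) : Seg := ⟨s.pos, -s.hi, -s.lo⟩

theorem negPos_crosses_negSpan {v h : Seg} : v.negPos.Crosses h.negSpan ↔ v.Crosses h := by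
  simp only [Crosses, negPos, negSpan, Set.mem_Ioo, neg_lt_neg_iff]
  tauto

end Seg

section Sweep
variable {ι : Type*} (V : Finset ι) (f : ι → Seg) (t : ℕ)

noncomputable def rightStab (v : ι) (y : ℝ) : Finset ι :=
  {w ∈ V | (f v).pos < (f w).pos ∧ y ∈ Set.Ioo (f w).lo (f w).hi}

noncomputable def window (v : ι) (y : ℝ) : Finset ι :=
  lowest (rightStab V f v y) (fun w => (f w).pos) t

variable {V f t}

theorem mem_window {v w : ι} {y : ℝ} (hw : w ∈ window V f t v y) :
    w ∈ V ∧ (f v).pos < (f w).pos ∧ y ∈ Set.Ioo (f w).lo (f w).hi :=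
  mem_filter.1 (lowest_subset hw)

theorem window_eq_window {v : ι} {z z' : ℝ} (hz : z ≤ z')
    (henter : ∀ w ∈ window V f t v z', (f w).lo ∉ Set.Ico z z')
    (hleave : ∀ w ∈ window V f t v z, (f w).hi ∉ Set.Ioc z z') :
    window V f t v z = window V f t v z' := by
  refine lowest_eq_of_subset (fun w hw => ?_) (fun w hw => ?_)
  · obtain ⟨hwV, hvw, hlo, hhi⟩ := mem_window hw
    have := hleave w hw
    simp only [Set.mem_Ioc, not_and, not_le] at this
    exact mem_filter.2 ⟨hwV, hvw, hlo.trans_le hz, this hhi⟩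
  · obtain ⟨hwV, hvw, hlo, hhi⟩ := mem_window hw
    have := henter w hw
    simp only [Set.mem_Ico, not_and, not_lt] at this
    exact mem_filter.2 ⟨hwV, hvw, not_le.1 fun h => (this h).not_gt hlo, hz.trans_lt hhi⟩

/-- All these segments but the leftmost one stab height `y` between the leftmost one and `w`, and
fewer than `t` segments do. -/
theorem card_filter_mem_window_le (hinj : Set.InjOn (fun v => (f v).pos) V) (w : ι) (y : ℝ) :
    #{v ∈ V | y ∈ Set.Ioo (f v).lo (f v).hi ∧ w ∈ window V f t v y} ≤ t := by
  set P := {v ∈ V | y ∈ Set.Ioo (f v).lo (f v).hi ∧ w ∈ window V f t v y}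
  rcases P.eq_empty_or_nonempty with hP | hP
  · simp [hP]
  obtain ⟨v₀, hv₀, hmin⟩ := exists_min_image P (fun v => (f v).pos) hP
  obtain ⟨hv₀V, -, hw₀⟩ := mem_filter.1 hv₀
  have hsub : P.erase v₀ ⊆ {w' ∈ rightStab V f v₀ y | (f w').pos < (f w).pos} := by
    intro v hv
    obtain ⟨hne, hvP⟩ := mem_erase.1 hv
    obtain ⟨hvV, hyv, hwv⟩ := mem_filter.1 hvP
    have hlt : (f v₀).pos < (f v).pos :=
      (hmin v hvP).lt_of_ne fun h => hne (hinj hvV hv₀V h.symm)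
    exact mem_filter.2 ⟨mem_filter.2 ⟨hvV, hlt, hyv⟩, (mem_window hwv).2.1⟩
  have hrank := (card_le_card hsub).trans_lt (mem_filter.1 hw₀).2
  rw [card_erase_of_mem hv₀] at hrank
  omega

theorem card_filter_exists_mem_window_le (hinj : Set.InjOn (fun v => (f v).pos) V) (w : ι)
    {P : ℝ → Prop} (hP : {y | P y}.Subsingleton) :
    #{v ∈ V | ∃ y, P y ∧ y ∈ Set.Ioo (f v).lo (f v).hi ∧ w ∈ window V f t v y} ≤ t := by
  by_cases h : ∃ y, P y
  · obtain ⟨y₀, hy₀⟩ := h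
    refine (card_le_card (monotone_filter_right _ fun v _ => ?_)).trans
      (card_filter_mem_window_le hinj w y₀)
    rintro ⟨y, hy, hyv, hwv⟩
    exact hP hy hy₀ ▸ ⟨hyv, hwv⟩
  · simp [not_exists.1 h]

variable (V f t) (Y : Finset ℝ)

-- The witness height, the sample height next to an endpoint of `w`, does not depend on `v`.
def Enters (v w : ι) : Prop :=
  ∃ y, IsLeast {y' ∈ (Y : Set ℝ) | (f w).lo < y'} y ∧ y ∈ Set.Ioo (f v).lo (f v).hi ∧
    w ∈ window V f t v y

def Leaves (v w : ι) : Prop :=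
  ∃ y, IsGreatest {y' ∈ (Y : Set ℝ) | y' < (f w).hi} y ∧ y ∈ Set.Ioo (f v).lo (f v).hi ∧
    w ∈ window V f t v y

variable {V f t Y}

theorem mem_changePairs_window {v : ι} {p : ℝ × ℝ}
    (hp : p ∈ changePairs {y ∈ Y | y ∈ Set.Ioo (f v).lo (f v).hi} (window V f t v)) :
    p.1 ∈ Set.Ioo (f v).lo (f v).hi ∧ (p.2 ∈ Y ∧ p.2 ∈ Set.Ioo (f v).lo (f v).hi) ∧
      p.1 < p.2 ∧ (∀ y ∈ Y, y ∈ Set.Ioo (f v).lo (f v).hi → y ∉ Set.Ioo p.1 p.2) ∧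
      window V f t v p.1 ≠ window V f t v p.2 := by
  obtain ⟨hp1, hp2, hlt, hgap, hne⟩ := mem_changePairs.1 hp
  exact ⟨(mem_filter.1 hp1).2, mem_filter.1 hp2, hlt,
    fun y hy hyv => hgap y (mem_filter.2 ⟨hy, hyv⟩), hne⟩

theorem card_filter_changePairs_enter_le (v : ι) :
    #{p ∈ changePairs {y ∈ Y | y ∈ Set.Ioo (f v).lo (f v).hi} (window V f t v) |
        ∃ w ∈ window V f t v p.2, (f w).lo ∈ Set.Ico p.1 p.2} ≤
      #{w ∈ V | Enters V f t Y v w} := by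
  refine card_le_card_of_forall_subsingleton
    (fun p w => w ∈ window V f t v p.2 ∧ (f w).lo ∈ Set.Ico p.1 p.2) (fun p hp => ?_)
    (fun w _ p hp q hq => eq_of_mem_changePairs_of_mem_Ico (filter_subset _ _ hp.1)
      (filter_subset _ _ hq.1) hp.2.2 hq.2.2)
  obtain ⟨hpC, w, hw, hlo⟩ := mem_filter.1 hp
  obtain ⟨hp1v, ⟨hp2Y, hp2v⟩, -, hgap, -⟩ := mem_changePairs_window hpC
  refine ⟨w, mem_filter.2 ⟨(mem_window hw).1, p.2, ⟨⟨hp2Y, hlo.2⟩, fun y hy => ?_⟩, hp2v, hw⟩,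
    hw, hlo⟩
  by_contra! hlt
  exact hgap y hy.1 ⟨hp1v.1.trans_le (hlo.1.trans hy.2.le), hlt.trans hp2v.2⟩
    ⟨hlo.1.trans_lt hy.2, hlt⟩

theorem card_filter_changePairs_leave_le (v : ι) :
    #{p ∈ changePairs {y ∈ Y | y ∈ Set.Ioo (f v).lo (f v).hi} (window V f t v) |
        ∃ w ∈ window V f t v p.1, (f w).hi ∈ Set.Ioc p.1 p.2} ≤
      #{w ∈ V | Leaves V f t Y v w} := by
  refine card_le_card_of_forall_subsingleton
    (fun p w => w ∈ window V f t v p.1 ∧ (f w).hi ∈ Set.Ioc p.1 p.2) (fun p hp => ?_)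
    (fun w _ p hp q hq => eq_of_mem_changePairs_of_mem_Ioc (filter_subset _ _ hp.1)
      (filter_subset _ _ hq.1) hp.2.2 hq.2.2)
  obtain ⟨hpC, w, hw, hhi⟩ := mem_filter.1 hp
  obtain ⟨hp1v, ⟨hp2Y, hp2v⟩, -, hgap, -⟩ := mem_changePairs_window hpC
  obtain ⟨hp1Y, -⟩ := mem_filter.1 (mem_changePairs.1 hpC).1
  refine ⟨w, mem_filter.2 ⟨(mem_window hw).1, p.1, ⟨⟨hp1Y, hhi.1⟩, fun y hy => ?_⟩, hp1v, hw⟩,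
    hw, hhi⟩
  by_contra! hlt
  exact hgap y hy.1 ⟨hp1v.1.trans hlt, (hy.2.trans_le hhi.2).trans hp2v.2⟩
    ⟨hlt, hy.2.trans_le hhi.2⟩

theorem card_changePairs_window_le (v : ι) :
    #(changePairs {y ∈ Y | y ∈ Set.Ioo (f v).lo (f v).hi} (window V f t v)) ≤
      #{w ∈ V | Enters V f t Y v w} + #{w ∈ V | Leaves V f t Y v w} := by
  set C := changePairs {y ∈ Y | y ∈ Set.Ioo (f v).lo (f v).hi} (window V f t v)
  have hsplit : C ⊆ {p ∈ C | ∃ w ∈ window V f t v p.2, (f w).lo ∈ Set.Ico p.1 p.2} ∪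
      {p ∈ C | ∃ w ∈ window V f t v p.1, (f w).hi ∈ Set.Ioc p.1 p.2} := by
    intro p hp
    by_contra hnot
    simp only [mem_union, mem_filter, not_or, not_and, not_exists] at hnot
    obtain ⟨-, -, hlt, -, hne⟩ := mem_changePairs_window hp
    exact hne <| window_eq_window hlt.le (fun w hw h => hnot.1 hp w hw h)
      (fun w hw h => hnot.2 hp w hw h)
  grw [hsplit, card_union_le, card_filter_changePairs_enter_le, card_filter_changePairs_leave_le]

end Sweep

section Heavy
variable {ι κ : Type*} {V : Finset ι} {f : ι → Seg} {t : ℕ} {H : Finset κ} {g : κ → Seg}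

theorem sum_card_filter_enters_le (hinj : Set.InjOn (fun v => (f v).pos) V) (Y : Finset ℝ) :
    ∑ v ∈ V, #{w ∈ V | Enters V f t Y v w} ≤ t * #V := by
  rw [sum_card_filter_comm, mul_comm, ← smul_eq_mul]
  exact sum_le_card_nsmul _ _ _ fun w _ =>
    card_filter_exists_mem_window_le hinj w fun _ ha _ hb => IsLeast.unique ha hb

theorem sum_card_filter_leaves_le (hinj : Set.InjOn (fun v => (f v).pos) V) (Y : Finset ℝ) :
    ∑ v ∈ V, #{w ∈ V | Leaves V f t Y v w} ≤ t * #V := by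
  rw [sum_card_filter_comm, mul_comm, ← smul_eq_mul]
  exact sum_le_card_nsmul _ _ _ fun w _ =>
    card_filter_exists_mem_window_le hinj w fun _ ha _ hb => IsGreatest.unique ha hb

variable (V f g) in
noncomputable def rightCrossers (v : ι) (h : κ) : Finset ι :=
  {w ∈ V | (f w).Crosses (g h) ∧ (f v).pos < (f w).pos}

theorem window_crosses {v : ι} {h : κ} (hv : (f v).Crosses (g h))
    (hheavy : t ≤ #(rightCrossers V f g v h)) :
    t ≤ #(window V f t v (g h).pos) ∧ ∀ w ∈ window V f t v (g h).pos, (f w).Crosses (g h) := by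
  have hsub : rightCrossers V f g v h ⊆
      {w ∈ rightStab V f v (g h).pos | (f w).pos < (g h).hi} := by
    intro w hw
    obtain ⟨hwV, hwh, hvw⟩ := mem_filter.1 hw
    exact mem_filter.2 ⟨mem_filter.2 ⟨hwV, hvw, hwh.2⟩, hwh.1.2⟩
  have hbelow := hheavy.trans (card_le_card hsub)
  refine ⟨le_card_lowest (hbelow.trans (card_le_card (filter_subset _ _))), fun w hw => ?_⟩
  obtain ⟨-, hvw, hwy⟩ := mem_window hw
  exact ⟨⟨hv.1.1.trans hvw, key_lt_of_mem_lowest hbelow hw⟩, hwy⟩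

/-- The whole window of `v` at the height of such an `h` crosses `h`, so fewer than `t` of them
share a window. -/
theorem card_filter_heavy_le (hfree : BicliqueFree t (fun v h => (f v).Crosses (g h)) V H)
    (v : ι) :
    #{h ∈ H | (f v).Crosses (g h) ∧ t ≤ #(rightCrossers V f g v h)} ≤
      (t - 1) * #({y ∈ H.image (fun h => (g h).pos) | y ∈ Set.Ioo (f v).lo (f v).hi}.image
        (window V f t v)) := by
  set Hv := {h ∈ H | (f v).Crosses (g h) ∧ t ≤ #(rightCrossers V f g v h)}
  refine (card_le_mul_card_image (f := fun h => window V f t v (g h).pos) Hv (t - 1)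
    fun W hW => ?_).trans (Nat.mul_le_mul_left _ (card_le_card fun W hW => ?_))
  · obtain ⟨h₀, hh₀, rfl⟩ := mem_image.1 hW
    by_contra! hlt
    obtain ⟨w, hw, h, hh, hwh⟩ := hfree _ (fun w hw => (mem_window hw).1)
      {h ∈ Hv | window V f t v (g h).pos = window V f t v (g h₀).pos}
      ((filter_subset _ _).trans (filter_subset _ _))
      (window_crosses (mem_filter.1 hh₀).2.1 (mem_filter.1 hh₀).2.2).1 (by omega)
    obtain ⟨hhHv, heq⟩ := mem_filter.1 hh
    exact hwh ((window_crosses (mem_filter.1 hhHv).2.1 (mem_filter.1 hhHv).2.2).2 w (heq ▸ hw))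
  · obtain ⟨h, hh, rfl⟩ := mem_image.1 hW
    obtain ⟨hhH, hvh, -⟩ := mem_filter.1 hh
    exact mem_image_of_mem _ (mem_filter.2 ⟨mem_image_of_mem _ hhH, hvh.2⟩)

theorem card_rightHeavy_le (hinj : Set.InjOn (fun v => (f v).pos) V)
    (hfree : BicliqueFree t (fun v h => (f v).Crosses (g h)) V H) :
    #{p ∈ V ×ˢ H | (f p.1).Crosses (g p.2) ∧ t ≤ #(rightCrossers V f g p.1 p.2)} ≤
      (t - 1) * ((2 * t + 1) * #V) := by
  set Y := H.image (fun h => (g h).pos)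
  calc #{p ∈ V ×ˢ H | (f p.1).Crosses (g p.2) ∧ t ≤ #(rightCrossers V f g p.1 p.2)}
      = ∑ v ∈ V, #{h ∈ H | (f v).Crosses (g h) ∧ t ≤ #(rightCrossers V f g v h)} :=
        card_filter_product_eq_sum_left V H fun v h =>
          (f v).Crosses (g h) ∧ t ≤ #(rightCrossers V f g v h)
    _ ≤ ∑ v ∈ V, (t - 1) * (1 + (#{w ∈ V | Enters V f t Y v w} +
          #{w ∈ V | Leaves V f t Y v w})) :=
        sum_le_sum fun v _ => (card_filter_heavy_le hfree v).trans <| Nat.mul_le_mul_left _ <|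
          (card_image_le_one_add_card_changePairs _ _).trans
            (Nat.add_le_add_left (card_changePairs_window_le (Y := Y) v) 1)
    _ = (t - 1) * (#V + (∑ v ∈ V, #{w ∈ V | Enters V f t Y v w} +
          ∑ v ∈ V, #{w ∈ V | Leaves V f t Y v w})) := by
        rw [← mul_sum, sum_add_distrib, sum_add_distrib, sum_const, smul_eq_mul, mul_one]
    _ ≤ (t - 1) * (#V + (t * #V + t * #V)) := by
        grw [sum_card_filter_enters_le hinj, sum_card_filter_leaves_le hinj]
    _ = (t - 1) * ((2 * t + 1) * #V) := by ring

end Heavy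

section Crossings
variable {ι κ : Type*} {V : Finset ι} {f : ι → Seg} {t : ℕ} {H : Finset κ} {g : κ → Seg}

theorem card_filter_light_le (k : ℕ) :
    #{p ∈ V ×ˢ H | (f p.1).Crosses (g p.2) ∧ #{w ∈ V | (f w).Crosses (g p.2)} ≤ k} ≤ k * #H := by
  rw [card_filter_product_eq_sum_right V H fun v h =>
    (f v).Crosses (g h) ∧ #{w ∈ V | (f w).Crosses (g h)} ≤ k, mul_comm, ← smul_eq_mul]
  refine sum_le_card_nsmul _ _ _ fun h _ => ?_
  by_cases hk : #{w ∈ V | (f w).Crosses (g h)} ≤ k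
  · exact (card_le_card (monotone_filter_right _ fun _ _ hv => hv.1)).trans hk
  · simp [hk]

theorem le_card_rightCrossers_or (hinj : Set.InjOn (fun v => (f v).pos) V) {v : ι} {h : κ}
    (hv : v ∈ V) (hvh : (f v).Crosses (g h)) (hk : 2 * t < #{w ∈ V | (f w).Crosses (g h)}) :
    t ≤ #(rightCrossers V f g v h) ∨
      t ≤ #(rightCrossers V (fun v => (f v).negPos) (fun h => (g h).negSpan) v h) := by
  have hsplit : {w ∈ V | (f w).Crosses (g h)}.erase v ⊆ rightCrossers V f g v h ∪
      rightCrossers V (fun v => (f v).negPos) (fun h => (g h).negSpan) v h := by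
    intro w hw
    obtain ⟨hne, hwV, hwh⟩ := mem_erase.1 hw |>.imp_right mem_filter.1
    rcases lt_or_gt_of_ne fun h => hne (hinj hwV hv h) with hlt | hlt
    · exact mem_union_right _
        (mem_filter.2 ⟨hwV, Seg.negPos_crosses_negSpan.2 hwh, neg_lt_neg hlt⟩)
    · exact mem_union_left _ (mem_filter.2 ⟨hwV, hwh, hlt⟩)
  have := (card_le_card hsplit).trans (card_union_le _ _)
  rw [card_erase_of_mem (mem_filter.2 ⟨hv, hvh⟩)] at this
  omega

theorem card_crossings_le (hinj : Set.InjOn (fun v => (f v).pos) V)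
    (hfree : BicliqueFree t (fun v h => (f v).Crosses (g h)) V H) :
    #{p ∈ V ×ˢ H | (f p.1).Crosses (g p.2)} ≤
      2 * t * #H + 2 * ((t - 1) * ((2 * t + 1) * #V)) := by
  set f' := fun v => (f v).negPos
  set g' := fun h => (g h).negSpan
  have hcover : {p ∈ V ×ˢ H | (f p.1).Crosses (g p.2)} ⊆
      {p ∈ V ×ˢ H | (f p.1).Crosses (g p.2) ∧ #{w ∈ V | (f w).Crosses (g p.2)} ≤ 2 * t} ∪
      {p ∈ V ×ˢ H | (f p.1).Crosses (g p.2) ∧ t ≤ #(rightCrossers V f g p.1 p.2)} ∪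
      {p ∈ V ×ˢ H | (f' p.1).Crosses (g' p.2) ∧ t ≤ #(rightCrossers V f' g' p.1 p.2)} := by
    intro p hp
    obtain ⟨hpVH, hcross⟩ := mem_filter.1 hp
    by_cases hk : #{w ∈ V | (f w).Crosses (g p.2)} ≤ 2 * t
    · exact mem_union_left _ (mem_union_left _ (mem_filter.2 ⟨hpVH, hcross, hk⟩))
    rcases le_card_rightCrossers_or hinj (mem_product.1 hpVH).1 hcross (not_le.1 hk) with hR | hL
    · exact mem_union_left _ (mem_union_right _ (mem_filter.2 ⟨hpVH, hcross, hR⟩))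
    · exact mem_union_right _ (mem_filter.2 ⟨hpVH, Seg.negPos_crosses_negSpan.2 hcross, hL⟩)
  have hinj' : Set.InjOn (fun v => (f' v).pos) V := fun a ha b hb h => hinj ha hb (neg_inj.1 h)
  have hfree' : BicliqueFree t (fun v h => (f' v).Crosses (g' h)) V H :=
    hfree.mono fun _ _ _ _ => Seg.negPos_crosses_negSpan.1
  grw [hcover, card_union_le, card_union_le, card_filter_light_le, card_rightHeavy_le hinj hfree,
    card_rightHeavy_le hinj' hfree']
  omega

end Crossings

namespace Rect

def sideX (r : Rect) (s : Bool) : ℝ := bif s then r.x2 else r.x1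

def sideY (r : Rect) (s : Bool) : ℝ := bif s then r.y2 else r.y1

def vSide (r : Rect) (s : Bool) : Seg := ⟨r.sideX s, r.y1, r.y2⟩

def hSide (r : Rect) (s : Bool) : Seg := ⟨r.sideY s, r.x1, r.x2⟩

theorem mem_frame {r : Rect} {p : ℝ × ℝ} :
    p ∈ r.frame ↔ (∃ s, p.2 = r.sideY s) ∧ p.1 ∈ Set.Icc r.x1 r.x2 ∨
      (∃ s, p.1 = r.sideX s) ∧ p.2 ∈ Set.Icc r.y1 r.y2 := by
  simp only [frame, sideY, sideX, Set.mem_union, Set.mem_prod, Set.mem_insert_iff,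
    Set.mem_singleton_iff, Bool.exists_bool, cond_false, cond_true]
  tauto

theorem frame_inter_nonempty_of_crosses {r s : Rect} {a b : Bool}
    (h : (r.vSide a).Crosses (s.hSide b)) : (r.frame ∩ s.frame).Nonempty :=
  ⟨(r.sideX a, s.sideY b), mem_frame.2 (Or.inr ⟨⟨a, rfl⟩, Set.Ioo_subset_Icc_self h.2⟩),
    mem_frame.2 (Or.inl ⟨⟨b, rfl⟩, Set.Ioo_subset_Icc_self h.1⟩)⟩

end Rect

section GeneralPosition
variable {F : Finset Rect} {r s : Rect}

theorem GenPos.mono {G : Finset Rect} (h : GenPos F) (hGF : G ⊆ F) : GenPos G :=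
  fun r hr s hs => h r (hGF hr) s (hGF hs)

theorem GenPos.sideX_ne (h : GenPos F) (hr : r ∈ F) (hs : s ∈ F) (hne : r ≠ s) (a b : Bool) :
    r.sideX a ≠ s.sideX b := by
  have := Set.eq_empty_iff_forall_notMem.1 (h r hr s hs hne).1 (r.sideX a)
  cases a <;> cases b <;> simp_all [Rect.sideX]

theorem GenPos.sideY_ne (h : GenPos F) (hr : r ∈ F) (hs : s ∈ F) (hne : r ≠ s) (a b : Bool) :
    r.sideY a ≠ s.sideY b := by
  have := Set.eq_empty_iff_forall_notMem.1 (h r hr s hs hne).2 (r.sideY a)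
  cases a <;> cases b <;> simp_all [Rect.sideY]

theorem GenPos.crosses_of_mem_frame (h : GenPos F) (hr : r ∈ F) (hs : s ∈ F) (hne : r ≠ s)
    {p : ℝ × ℝ} {a b : Bool} (hpr : p.1 = r.sideX a ∧ p.2 ∈ Set.Icc r.y1 r.y2)
    (hps : p.2 = s.sideY b ∧ p.1 ∈ Set.Icc s.x1 s.x2) : (r.vSide a).Crosses (s.hSide b) := by
  obtain ⟨hp₁, hr₂⟩ := hpr
  obtain ⟨hp₂, hs₁⟩ := hps
  rw [hp₁] at hs₁
  rw [hp₂] at hr₂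
  exact ⟨((Set.eq_endpoints_or_mem_Ioo_of_mem_Icc hs₁).resolve_left
      (h.sideX_ne hr hs hne a false)).resolve_left (h.sideX_ne hr hs hne a true),
    ((Set.eq_endpoints_or_mem_Ioo_of_mem_Icc hr₂).resolve_left
      (h.sideY_ne hs hr hne.symm b false)).resolve_left (h.sideY_ne hs hr hne.symm b true)⟩

theorem GenPos.exists_crosses_of_frame_inter (h : GenPos F) (hr : r ∈ F) (hs : s ∈ F)
    (hne : r ≠ s) (hrs : (r.frame ∩ s.frame).Nonempty) :
    ∃ a b, (r.vSide a).Crosses (s.hSide b) ∨ (s.vSide a).Crosses (r.hSide b) := by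
  obtain ⟨p, hpr, hps⟩ := hrs
  rcases Rect.mem_frame.1 hpr with ⟨⟨a, hra⟩, hr₁⟩ | ⟨⟨a, hra⟩, hr₂⟩ <;>
    rcases Rect.mem_frame.1 hps with ⟨⟨b, hsb⟩, hs₁⟩ | ⟨⟨b, hsb⟩, hs₂⟩
  · exact absurd (hra.symm.trans hsb) (h.sideY_ne hr hs hne a b)
  · exact ⟨b, a, Or.inr (h.crosses_of_mem_frame hs hr hne.symm ⟨hsb, hs₂⟩ ⟨hra, hr₁⟩)⟩
  · exact ⟨a, b, Or.inl (h.crosses_of_mem_frame hr hs hne ⟨hra, hr₂⟩ ⟨hsb, hs₁⟩)⟩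
  · exact absurd (hra.symm.trans hsb) (h.sideX_ne hr hs hne a b)

end GeneralPosition

section Frames
variable {t : ℕ} {A B : Finset Rect}

theorem GenPos.injOn_sideX (h : GenPos A) (a : Bool) : Set.InjOn (fun r : Rect => r.sideX a) A :=
  fun _ hr _ hs hrs => by_contra fun hne => h.sideX_ne hr hs hne a a hrs

theorem GenPos.injOn_sideY (h : GenPos A) (b : Bool) : Set.InjOn (fun r : Rect => r.sideY b) A :=
  fun _ hr _ hs hrs => by_contra fun hne => h.sideY_ne hr hs hne b b hrs

theorem card_filter_vSide_crosses_hSide_le (hA : GenPos A)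
    (hfree : BicliqueFree t (fun a b => (a.frame ∩ b.frame).Nonempty) A B) (a b : Bool) :
    #{p ∈ A ×ˢ B | (p.1.vSide a).Crosses (p.2.hSide b)} ≤
      2 * t * #B + 2 * ((t - 1) * ((2 * t + 1) * #A)) :=
  card_crossings_le (hA.injOn_sideX a)
    (hfree.mono fun _ _ _ _ => Rect.frame_inter_nonempty_of_crosses)

theorem card_filter_hSide_crosses_vSide_le (hA : GenPos A)
    (hfree : BicliqueFree t (fun a b => (a.frame ∩ b.frame).Nonempty) A B) (a b : Bool) :
    #{p ∈ A ×ˢ B | (p.1.hSide b).Crosses (p.2.vSide a)} ≤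
      2 * t * #B + 2 * ((t - 1) * ((2 * t + 1) * #A)) :=
  card_crossings_le (f := fun r => r.hSide b) (g := fun r => r.vSide a) (hA.injOn_sideY b)
    (hfree.mono fun _ _ _ _ hc => Set.inter_comm _ _ ▸
      Rect.frame_inter_nonempty_of_crosses (Seg.crosses_comm.1 hc))

theorem GenPos.filter_frame_inter_subset (hgp : GenPos (A ∪ B)) :
    {p ∈ A ×ˢ B | (p.1.frame ∩ p.2.frame).Nonempty} ⊆ {p ∈ A ×ˢ B | p.1 = p.2} ∪
      (univ : Finset (Bool × Bool)).biUnion fun q =>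
        {p ∈ A ×ˢ B | (p.1.vSide q.1).Crosses (p.2.hSide q.2)} ∪
        {p ∈ A ×ˢ B | (p.1.hSide q.2).Crosses (p.2.vSide q.1)} := by
  intro p hp
  obtain ⟨hpAB, hmeet⟩ := mem_filter.1 hp
  obtain ⟨hpA, hpB⟩ := mem_product.1 hpAB
  by_cases hp12 : p.1 = p.2
  · exact mem_union_left _ (mem_filter.2 ⟨hpAB, hp12⟩)
  obtain ⟨a, b, hc | hc⟩ := hgp.exists_crosses_of_frame_inter (mem_union_left _ hpA)
    (mem_union_right _ hpB) hp12 hmeet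
  · exact mem_union_right _ (mem_biUnion.2 ⟨(a, b), mem_univ _,
      mem_union_left _ (mem_filter.2 ⟨hpAB, hc⟩)⟩)
  · exact mem_union_right _ (mem_biUnion.2 ⟨(a, b), mem_univ _,
      mem_union_right _ (mem_filter.2 ⟨hpAB, Seg.crosses_comm.1 hc⟩)⟩)

theorem card_filter_frame_inter_le (hgp : GenPos (A ∪ B))
    (hfree : BicliqueFree t (fun a b => (a.frame ∩ b.frame).Nonempty) A B) :
    #{p ∈ A ×ˢ B | (p.1.frame ∩ p.2.frame).Nonempty} ≤
      #B + 8 * (2 * t * #B + 2 * ((t - 1) * ((2 * t + 1) * #A))) := by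
  have hA : GenPos A := hgp.mono subset_union_left
  have hdiag : #{p ∈ A ×ˢ B | p.1 = p.2} ≤ #B :=
    card_le_card_of_injOn Prod.snd (fun p hp => (mem_product.1 (mem_filter.1 hp).1).2)
      fun p hp q hq hpq => Prod.ext (by rw [(mem_filter.1 hp).2, (mem_filter.1 hq).2, hpq]) hpq
  grw [hgp.filter_frame_inter_subset, card_union_le, hdiag, card_biUnion_le,
    sum_le_card_nsmul univ _ (2 * (2 * t * #B + 2 * ((t - 1) * ((2 * t + 1) * #A))))
      fun q _ => (card_union_le _ _).trans (by
        grw [card_filter_vSide_crosses_hSide_le hA hfree,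
          card_filter_hSide_crosses_vSide_le hA hfree]
        omega)]
  simp only [card_univ, Fintype.card_prod, Fintype.card_bool, smul_eq_mul]
  omega

theorem add_eight_mul_le_seventeen_mul (t n m : ℕ) (ht : 2 ≤ t) :
    m + 8 * (2 * t * m + 2 * ((t - 1) * ((2 * t + 1) * n))) ≤ 17 * (t ^ 6 * n + t * m) := by
  have h1 : (t - 1) * ((2 * t + 1) * n) ≤ 3 * t ^ 2 * n := by
    calc (t - 1) * ((2 * t + 1) * n) ≤ t * ((3 * t) * n) := by gcongr <;> omega
      _ = 3 * t ^ 2 * n := by ring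
  have h2 : 48 * t ^ 2 ≤ 17 * t ^ 6 := by
    have : 16 ≤ t ^ 4 := by simpa using Nat.pow_le_pow_left ht 4
    nlinarith [Nat.zero_le (t ^ 2)]
  have h3 : 48 * t ^ 2 * n ≤ 17 * t ^ 6 * n := Nat.mul_le_mul_right n h2
  nlinarith

end Frames

theorem stmt_14 :
    ∃ c : ℝ, 0 < c ∧ ∀ t : ℕ, 2 ≤ t → ∀ (A B : Finset Rect) (n m : ℕ),
      A.card = n → B.card = m → GenPos (A ∪ B) →
      (¬ ∃ (S T : Finset Rect), S ⊆ A ∧ T ⊆ B ∧ S.card = t ∧ T.card = t ∧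
        ∀ a ∈ S, ∀ b ∈ T, (a.frame ∩ b.frame).Nonempty) →
      ((((A ×ˢ B).filter fun p => (p.1.frame ∩ p.2.frame).Nonempty).card : ℝ)
        ≤ c * ((t : ℝ) ^ 6 * n + (t : ℝ) * m)) := by
  refine ⟨17, by norm_num, fun t ht A B n m hn hm hgp hfree => ?_⟩
  subst hn hm
  exact_mod_cast (card_filter_frame_inter_le hgp (bicliqueFree_of_not_exists hfree)).trans
    (add_eight_mul_le_seventeen_mul t #A #B ht)
end

section
/- Let t ≥ 1 be an integer, let A be a finite set, let B be a finite family of subsets of A, and let 𝓕 be a family of t-element subsets of A such that: (i) every T ∈ 𝓕 satisfies |{b ∈ B : T ⊆ b}| ≤ t−1; and (ii) for every b ∈ B with |b| ≥ t and every a ∈ b, there exists T ∈ 𝓕 with a ∈ T and T ⊆ b. Then Σ_{b ∈ B} |b| ≤ t·(t−1)·|𝓕| + t·|B|. -/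
open Finset

theorem stmt_15 {α : Type*} [DecidableEq α] (t : ℕ) (ht : 1 ≤ t)
    (A : Finset α) (B : Finset (Finset α)) (hB : ∀ b ∈ B, b ⊆ A)
    (𝓕 : Finset (Finset α)) (h𝓕 : ∀ T ∈ 𝓕, T ⊆ A ∧ T.card = t)
    (h1 : ∀ T ∈ 𝓕, (B.filter fun b => T ⊆ b).card ≤ t - 1)
    (h2 : ∀ b ∈ B, t ≤ b.card → ∀ a ∈ b, ∃ T ∈ 𝓕, a ∈ T ∧ T ⊆ b) :
    ∑ b ∈ B, b.card ≤ t * (t - 1) * 𝓕.card + t * B.card := by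
  have key : ∀ b ∈ B, b.card ≤ t * (𝓕.filter fun T => T ⊆ b).card + t := by
    intro b hb
    rcases lt_or_ge b.card t with h | h
    · omega
    · have hsub : b ⊆ (𝓕.filter fun T => T ⊆ b).biUnion id := by
        intro a ha
        obtain ⟨T, hT, haT, hTb⟩ := h2 b hb h a ha
        exact mem_biUnion.2 ⟨T, mem_filter.2 ⟨hT, hTb⟩, haT⟩
      calc b.card ≤ ((𝓕.filter fun T => T ⊆ b).biUnion id).card := card_le_card hsub
        _ ≤ ∑ T ∈ 𝓕.filter fun T => T ⊆ b, T.card := card_biUnion_le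
        _ = ∑ T ∈ 𝓕.filter fun T => T ⊆ b, t := by
            apply sum_congr rfl
            intro T hT
            exact (h𝓕 T (mem_filter.1 hT).1).2
        _ = t * (𝓕.filter fun T => T ⊆ b).card := by rw [sum_const, smul_eq_mul, mul_comm]
        _ ≤ _ := Nat.le_add_right _ _
  have swap : ∑ b ∈ B, (𝓕.filter fun T => T ⊆ b).card
      = ∑ T ∈ 𝓕, (B.filter fun b => T ⊆ b).card := by
    simp only [card_filter]
    exact sum_comm
  calc ∑ b ∈ B, b.card
      ≤ ∑ b ∈ B, (t * (𝓕.filter fun T => T ⊆ b).card + t) := sum_le_sum key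
    _ = t * (∑ b ∈ B, (𝓕.filter fun T => T ⊆ b).card) + t * B.card := by
        rw [sum_add_distrib, sum_const, smul_eq_mul, mul_comm B.card t, ← mul_sum]
    _ = t * (∑ T ∈ 𝓕, (B.filter fun b => T ⊆ b).card) + t * B.card := by rw [swap]
    _ ≤ t * ((t - 1) * 𝓕.card) + t * B.card := by
        gcongr
        calc ∑ T ∈ 𝓕, (B.filter fun b => T ⊆ b).card
            ≤ ∑ T ∈ 𝓕, (t - 1) := sum_le_sum h1
          _ = (t - 1) * 𝓕.card := by rw [sum_const, smul_eq_mul, mul_comm]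
    _ = t * (t - 1) * 𝓕.card + t * B.card := by ring
end
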